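/- arXiv:2211.09048 — 10 statements merged into one kernel-verified Lean document; each statement's English description precedes it below -/
import Mathlib

section
/- Let G be a graph, L a list assignment for G, and r a request of L with nonempty domain D (i.e., r(v) ∈ L(v) for all v ∈ D). If ε > 1/ρ(G), where ρ(G) = max over nonempty subgraphs H of |V(H)|/α(H) is the Hall ratio, then for every k there exists a k-assignment L and a request r of L such that no proper L-coloring of G colors at least ε|D| vertices of D with their requested color. Conversely, if ε ≤ 1/ρ(G), then G is (k, ε)-flexible for every k ≥ Δ(G)+1. -/
open SimpleGraph Finset

variable {V : Type*}

/-- A proper list coloring: colors chosen from lists, adjacent vertices differ. -/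
def ProperListColoring (G : SimpleGraph V) (L : V → Finset ℕ) (f : V → ℕ) : Prop :=
  (∀ v, f v ∈ L v) ∧ ∀ ⦃u w⦄, G.Adj u w → f u ≠ f w

/-- The triple (G,L,r) with request domain D is ε-satisfiable. -/
def Satisfiable (G : SimpleGraph V) (L : V → Finset ℕ) (D : Finset V) (r : V → ℕ)
    (ε : ℝ) : Prop :=
  ∃ f : V → ℕ, ProperListColoring G L f ∧
    ε * (D.card : ℝ) ≤ ((D.filter fun v => f v = r v).card : ℝ)

/-- G is (k,ε)-flexible. -/
def Flexible (G : SimpleGraph V) (k : ℕ) (ε : ℝ) : Prop :=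
  ∀ (L : V → Finset ℕ), (∀ v, (L v).card = k) →
    ∀ (D : Finset V) (r : V → ℕ), D.Nonempty → (∀ v ∈ D, r v ∈ L v) →
      Satisfiable G L D r ε

/-- Independence number of the subgraph induced on `S`. -/
noncomputable def indepNumOn (G : SimpleGraph V) (S : Finset V) : ℕ := by
  classical
  exact (S.powerset.filter fun I => ∀ u ∈ I, ∀ w ∈ I, ¬ G.Adj u w).sup Finset.card

/-- The Hall ratio of a graph. -/
noncomputable def hallRatio (G : SimpleGraph V) [Fintype V] : ℝ :=
  sSup {x : ℝ | ∃ S : Finset V, S.Nonempty ∧ x = (S.card : ℝ) / (indepNumOn G S : ℝ)}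

/-- The list flexibility number: least k such that G is (k, 1/ρ(G))-flexible. -/
noncomputable def flexNumber (G : SimpleGraph V) [Fintype V] : ℕ :=
  sInf {k | Flexible G k (1 / hallRatio G)}

/-- d-degeneracy via an ordering. -/
def Degenerate (G : SimpleGraph V) (d : ℕ) : Prop :=
  ∃ f : V → ℕ, Function.Injective f ∧ ∀ v, ({u | G.Adj v u ∧ f u < f v}).ncard ≤ d

/-- s-choosability. -/
def Choosable (G : SimpleGraph V) (s : ℕ) : Prop :=
  ∀ L : V → Finset ℕ, (∀ v, (L v).card = s) → ∃ f, ProperListColoring G L f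

/-- List chromatic number. -/
noncomputable def listChromNum (G : SimpleGraph V) : ℕ := sInf {s | Choosable G s}

/-- Chromatic number as a natural number. -/
noncomputable def chromNat (G : SimpleGraph V) : ℕ := G.chromaticNumber.toNat

/-- The square of a graph. -/
def square (G : SimpleGraph V) : SimpleGraph V :=
  SimpleGraph.fromRel (fun u w => G.Adj u w ∨ ∃ x, G.Adj u x ∧ G.Adj x w)

/-- The join of two disjoint copies of the same graph. -/
def joinCopies (G : SimpleGraph V) : SimpleGraph (V ⊕ V) where
  Adj x y := match x, y with
    | Sum.inl u, Sum.inl w => G.Adj u w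
    | Sum.inr u, Sum.inr w => G.Adj u w
    | _, _ => True
  symm := ⟨by rintro (u|u) (w|w) h <;> first | exact h.symm | trivial⟩
  loopless := ⟨by rintro (u|u) h <;> exact G.irrefl h⟩

/-- The list packing number. -/
noncomputable def listPackingNumber (G : SimpleGraph V) : ℕ :=
  sInf {k | 0 < k ∧ ∀ L : V → Finset ℕ, (∀ v, (L v).card = k) →
    ∃ f : Fin k → V → ℕ, (∀ i, ProperListColoring G L (f i)) ∧
      ∀ i j, i ≠ j → ∀ v, f i v ≠ f j v}

/-- Binary entropy function. -/
noncomputable def binEnt (p : ℝ) : ℝ :=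
  -p * Real.logb 2 p - (1 - p) * Real.logb 2 (1 - p)



section AuxLemmas

variable {V : Type*}

lemma sup_filter_ge' {α : Type*} (p : Finset α → Prop) (inst : DecidablePred p) (S I : Finset α)
    (h1 : I ⊆ S) (h2 : p I) : I.card ≤ (S.powerset.filter p).sup Finset.card :=
  Finset.le_sup (Finset.mem_filter.mpr ⟨Finset.mem_powerset.mpr h1, h2⟩)

lemma sup_filter_le' {α : Type*} (p : Finset α → Prop) (inst : DecidablePred p) (S : Finset α) :
    (S.powerset.filter p).sup Finset.card ≤ S.card :=
  Finset.sup_le fun I hI =>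
    Finset.card_le_card (Finset.mem_powerset.mp (Finset.mem_filter.mp hI).1)

lemma sup_filter_attained' {α : Type*} (p : Finset α → Prop) (inst : DecidablePred p)
    (S : Finset α) (hp : p ∅) :
    ∃ I, I ⊆ S ∧ p I ∧ I.card = (S.powerset.filter p).sup Finset.card := by
  obtain ⟨I, hI, hEq⟩ := Finset.exists_mem_eq_sup _
    ⟨∅, Finset.mem_filter.mpr ⟨Finset.empty_mem_powerset S, hp⟩⟩ Finset.card
  rw [Finset.mem_filter, Finset.mem_powerset] at hI
  exact ⟨I, hI.1, hI.2, hEq.symm⟩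

lemma le_indepNumOn {G : SimpleGraph V} {S I : Finset V} (hIS : I ⊆ S)
    (hind : ∀ u ∈ I, ∀ w ∈ I, ¬ G.Adj u w) : I.card ≤ indepNumOn G S := by
  unfold indepNumOn
  exact sup_filter_ge' _ _ S I hIS hind

lemma exists_max_indep (G : SimpleGraph V) (S : Finset V) :
    ∃ I : Finset V, I ⊆ S ∧ (∀ u ∈ I, ∀ w ∈ I, ¬ G.Adj u w) ∧ I.card = indepNumOn G S := by
  unfold indepNumOn
  exact sup_filter_attained' _ _ S (by simp)

lemma indepNumOn_le (G : SimpleGraph V) (S : Finset V) : indepNumOn G S ≤ S.card := by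
  unfold indepNumOn
  exact sup_filter_le' _ _ S

lemma one_le_indepNumOn (G : SimpleGraph V) {S : Finset V} (hS : S.Nonempty) :
    1 ≤ indepNumOn G S := by
  obtain ⟨v, hv⟩ := hS
  have := le_indepNumOn (G := G) (I := {v}) (by simpa using hv)
    (by intro u hu w hw; simp only [Finset.mem_singleton] at hu hw
        subst hu; subst hw; exact fun h => G.irrefl h)
  simpa using this

section HallR
variable (G : SimpleGraph V) [Fintype V]

lemma ratioSet_finite : {x : ℝ | ∃ S : Finset V, S.Nonempty ∧
    x = (S.card : ℝ) / (indepNumOn G S : ℝ)}.Finite := by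
  apply Set.Finite.subset (Set.finite_range fun S : Finset V =>
    (S.card : ℝ) / (indepNumOn G S : ℝ))
  rintro x ⟨S, -, rfl⟩
  exact ⟨S, rfl⟩

lemma le_hallRatio {S : Finset V} (hS : S.Nonempty) :
    (S.card : ℝ) / (indepNumOn G S : ℝ) ≤ hallRatio G :=
  le_csSup (ratioSet_finite G).bddAbove ⟨S, hS, rfl⟩

lemma hallRatio_attained [Nonempty V] :
    ∃ S : Finset V, S.Nonempty ∧ hallRatio G = (S.card : ℝ) / (indepNumOn G S : ℝ) := by
  have h : hallRatio G ∈ {x : ℝ | ∃ S : Finset V, S.Nonempty ∧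
      x = (S.card : ℝ) / (indepNumOn G S : ℝ)} :=
    Set.Nonempty.csSup_mem ⟨_, ⟨Finset.univ, Finset.univ_nonempty, rfl⟩⟩ (ratioSet_finite G)
  exact h

lemma one_le_hallRatio [Nonempty V] : 1 ≤ hallRatio G := by
  have v := Classical.arbitrary V
  have h1 : indepNumOn G {v} = 1 := by
    have ha := indepNumOn_le G {v}
    have hb := one_le_indepNumOn G (Finset.singleton_nonempty v)
    simp only [Finset.card_singleton] at ha
    omega
  have := le_hallRatio G (Finset.singleton_nonempty v)
  rw [h1] at this
  simpa using this

end HallR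

/-- Greedy extension of a partial proper coloring on a graph with max degree < k. -/
lemma extend_coloring {V : Type*} [Fintype V] [DecidableEq V] (G : SimpleGraph V)
    [DecidableRel G.Adj]
    {k : ℕ} (hk : G.maxDegree < k) (L : V → Finset ℕ) (hL : ∀ v, k ≤ (L v).card)
    (n : ℕ) : ∀ (S : Finset V) (p : V → ℕ), (Finset.univ \ S).card = n →
    (∀ v ∈ S, p v ∈ L v) → (∀ u ∈ S, ∀ w ∈ S, G.Adj u w → p u ≠ p w) →
    ∃ f : V → ℕ, ProperListColoring G L f ∧ ∀ v ∈ S, f v = p v := by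
  classical
  induction n with
  | zero =>
    intro S p hcard hmem hprop
    have hS : S = Finset.univ := by
      have : Finset.univ \ S = ∅ := Finset.card_eq_zero.mp hcard
      have h2 := Finset.sdiff_eq_empty_iff_subset.mp this
      exact Finset.eq_univ_iff_forall.mpr fun v => h2 (Finset.mem_univ v)
    subst hS
    exact ⟨p, ⟨fun v => hmem v (Finset.mem_univ v),
      fun u w h => hprop u (Finset.mem_univ u) w (Finset.mem_univ w) h⟩, fun v _ => rfl⟩
  | succ n ih =>
    intro S p hcard hmem hprop
    have hne : (Finset.univ \ S).Nonempty := Finset.card_pos.mp (by omega)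
    obtain ⟨v, hv⟩ := hne
    have hvS : v ∉ S := (Finset.mem_sdiff.mp hv).2
    set forb : Finset ℕ := (G.neighborFinset v ∩ S).image p with hforb
    have hforb_card : forb.card < k := by
      calc forb.card ≤ (G.neighborFinset v ∩ S).card := Finset.card_image_le
        _ ≤ (G.neighborFinset v).card := Finset.card_le_card Finset.inter_subset_left
        _ = G.degree v := rfl
        _ ≤ G.maxDegree := G.degree_le_maxDegree v
        _ < k := hk
    have hex : (L v \ forb).Nonempty := by
      rw [← Finset.card_pos]
      have : ¬ L v ⊆ forb := fun h => by
        have := Finset.card_le_card h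
        have := hL v
        omega
      rcases Finset.not_subset.mp this with ⟨c, hc1, hc2⟩
      exact Finset.card_pos.mpr ⟨c, Finset.mem_sdiff.mpr ⟨hc1, hc2⟩⟩
    obtain ⟨c, hc⟩ := hex
    rw [Finset.mem_sdiff] at hc
    set p' := Function.update p v c with hp'
    have hcard' : (Finset.univ \ insert v S).card = n := by
      rw [Finset.sdiff_insert, Finset.card_erase_of_mem hv, hcard]
      omega
    have hmem' : ∀ u ∈ insert v S, p' u ∈ L u := by
      intro u hu
      rcases Finset.mem_insert.mp hu with rfl | hu
      · simpa [p', Function.update_self] using hc.1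
      · have : u ≠ v := fun h => hvS (h ▸ hu)
        rw [hp', Function.update_of_ne this]
        exact hmem u hu
    have hprop' : ∀ u ∈ insert v S, ∀ w ∈ insert v S, G.Adj u w → p' u ≠ p' w := by
      intro u hu w hw hadj
      rcases Finset.mem_insert.mp hu with hu0 | huS <;>
        rcases Finset.mem_insert.mp hw with hw0 | hwS
      · rw [hu0, hw0] at hadj; exact absurd hadj (G.irrefl)
      · have hwv : w ≠ v := fun h => hvS (h ▸ hwS)
        rw [hp', hu0, Function.update_self, Function.update_of_ne hwv]
        intro h
        refine hc.2 ?_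
        rw [h]
        exact Finset.mem_image.mpr ⟨w, Finset.mem_inter.mpr
          ⟨(G.mem_neighborFinset _ _).mpr (hu0 ▸ hadj), hwS⟩, rfl⟩
      · have huv : u ≠ v := fun h => hvS (h ▸ huS)
        rw [hp', hw0, Function.update_of_ne huv, Function.update_self]
        intro h
        refine hc.2 ?_
        rw [← h]
        exact Finset.mem_image.mpr ⟨u, Finset.mem_inter.mpr
          ⟨(G.mem_neighborFinset _ _).mpr (hw0 ▸ hadj.symm), huS⟩, rfl⟩
      · have h1 : u ≠ v := fun h => hvS (h ▸ huS)
        have h2 : w ≠ v := fun h => hvS (h ▸ hwS)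
        rw [hp', Function.update_of_ne h1, Function.update_of_ne h2]
        exact hprop u huS w hwS hadj
    obtain ⟨f, hf1, hf2⟩ := ih (insert v S) p' hcard' hmem' hprop'
    refine ⟨f, hf1, fun u hu => ?_⟩
    have : u ≠ v := fun h => hvS (h ▸ hu)
    rw [hf2 u (Finset.mem_insert_of_mem hu), hp', Function.update_of_ne this]

end AuxLemmas

/-- ε > 1/ρ(G) iff G is not (k,ε)-flexible for any k ≥ 1;
conversely ε ≤ 1/ρ(G) gives (k,ε)-flexibility for all k ≥ Δ(G)+1. -/
theorem stmt0 {V : Type*} [Fintype V] [Nonempty V] (G : SimpleGraph V)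
    [DecidableRel G.Adj] (ε : ℝ) :
    (ε > 1 / hallRatio G →
      ∀ k : ℕ, 1 ≤ k →
        ∃ (L : V → Finset ℕ) (D : Finset V) (r : V → ℕ),
          (∀ v, (L v).card = k) ∧ D.Nonempty ∧ (∀ v ∈ D, r v ∈ L v) ∧
            ¬ Satisfiable G L D r ε) ∧
    (ε ≤ 1 / hallRatio G → ∀ k : ℕ, G.maxDegree + 1 ≤ k → Flexible G k ε) := by
  classical
  have hρ1 : (1 : ℝ) ≤ hallRatio G := one_le_hallRatio G
  have hρpos : (0 : ℝ) < hallRatio G := lt_of_lt_of_le one_pos hρ1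
  constructor
  · -- Part 1
    intro hε k hk
    obtain ⟨S, hSne, hρ⟩ := hallRatio_attained G
    have hα1 : 1 ≤ indepNumOn G S := one_le_indepNumOn G hSne
    have hαpos : (0 : ℝ) < (indepNumOn G S : ℝ) := by exact_mod_cast hα1
    have hS1 : 0 < S.card := Finset.card_pos.mpr hSne
    have hSpos : (0 : ℝ) < (S.card : ℝ) := by exact_mod_cast hS1
    have hinv : 1 / hallRatio G = (indepNumOn G S : ℝ) / (S.card : ℝ) := by
      rw [hρ, one_div_div]
    have key : (indepNumOn G S : ℝ) < ε * S.card := by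
      rw [hinv] at hε
      exact (div_lt_iff₀ hSpos).mp hε
    refine ⟨fun _ => Finset.range k, S, fun _ => 0,
      fun v => Finset.card_range k, hSne,
      fun v _ => Finset.mem_range.mpr (by show 0 < k; omega), ?_⟩
    rintro ⟨f, ⟨hfmem, hfadj⟩, hcount⟩
    have hTind : ∀ u ∈ S.filter (fun v => f v = (fun _ => (0:ℕ)) v),
        ∀ w ∈ S.filter (fun v => f v = (fun _ => (0:ℕ)) v), ¬ G.Adj u w := by
      intro u hu w hw hadj
      have hu' := (Finset.mem_filter.mp hu).2
      have hw' := (Finset.mem_filter.mp hw).2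
      exact hfadj hadj (by simp only at hu' hw'; rw [hu', hw'])
    have hTle : (S.filter (fun v => f v = (fun _ => (0:ℕ)) v)).card ≤ indepNumOn G S :=
      le_indepNumOn (Finset.filter_subset _ _) hTind
    have hTle' : ((S.filter (fun v => f v = (fun _ => (0:ℕ)) v)).card : ℝ)
        ≤ (indepNumOn G S : ℝ) := by exact_mod_cast hTle
    linarith
  · -- Part 2
    intro hε k hk L hL D r hD hr
    obtain ⟨I, hID, hIind, hIcard⟩ := exists_max_indep G D
    have hk' : G.maxDegree < k := by omega
    obtain ⟨f, hf, hfI⟩ := extend_coloring G hk' L (fun v => (hL v).ge)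
      (Finset.univ \ I).card I r rfl
      (fun v hv => hr v (hID hv))
      (fun u hu w hw hadj => absurd hadj (hIind u hu w hw))
    refine ⟨f, hf, ?_⟩
    have hsub : I ⊆ D.filter fun v => f v = r v := fun v hv =>
      Finset.mem_filter.mpr ⟨hID hv, hfI v hv⟩
    have hcardle : (I.card : ℝ) ≤ ((D.filter fun v => f v = r v).card : ℝ) := by
      exact_mod_cast Finset.card_le_card hsub
    have hα1 : 1 ≤ indepNumOn G D := one_le_indepNumOn G hD
    have hαpos : (0 : ℝ) < (indepNumOn G D : ℝ) := by exact_mod_cast hα1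
    have hDpos : (0 : ℝ) < (D.card : ℝ) := by exact_mod_cast Finset.card_pos.mpr hD
    have h1 : (D.card : ℝ) / (indepNumOn G D : ℝ) ≤ hallRatio G := le_hallRatio G hD
    have hratpos : (0 : ℝ) < (D.card : ℝ) / (indepNumOn G D : ℝ) := div_pos hDpos hαpos
    have h2 : 1 / hallRatio G ≤ (indepNumOn G D : ℝ) / (D.card : ℝ) := by
      have := one_div_le_one_div_of_le hratpos h1
      rwa [one_div_div] at this
    have hεα : ε ≤ (indepNumOn G D : ℝ) / (D.card : ℝ) := le_trans hε h2
    have hfinal : ε * (D.card : ℝ) ≤ (indepNumOn G D : ℝ) := by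
      calc ε * (D.card : ℝ) ≤ ((indepNumOn G D : ℝ) / (D.card : ℝ)) * (D.card : ℝ) :=
            mul_le_mul_of_nonneg_right hεα (le_of_lt hDpos)
        _ = (indepNumOn G D : ℝ) := div_mul_cancel₀ _ (ne_of_gt hDpos)
    have : (indepNumOn G D : ℝ) = (I.card : ℝ) := by exact_mod_cast hIcard.symm
    linarith
end

section
/- For every graph G and ε ≤ 1/ρ(G), where ρ(G) is the Hall ratio of G, the graph G is (Δ(G)+1, ε)-flexible: for any (Δ(G)+1)-assignment L and any request r of L with domain D, there is a proper L-coloring of G that colors at least |D|/ρ(G) vertices of D with their requested colors. -/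
open SimpleGraph Finset

variable {V : Type*}

lemma greedy_aux {V : Type*} [Fintype V] [DecidableEq V] (G : SimpleGraph V)
    [DecidableRel G.Adj] (L : V → Finset ℕ) (hL : ∀ v, (L v).card = G.maxDegree + 1)
    (I : Finset V) (hind : ∀ u ∈ I, ∀ w ∈ I, ¬ G.Adj u w) (r : V → ℕ)
    (hr : ∀ v ∈ I, r v ∈ L v) (T : Finset V) :
    ∃ f : V → ℕ, (∀ v, f v ∈ L v) ∧ (∀ v ∈ I, f v = r v) ∧
      ∀ u ∈ I ∪ T, ∀ w ∈ I ∪ T, G.Adj u w → f u ≠ f w := by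
  induction T using Finset.induction with
  | empty =>
      have hne : ∀ v, (L v).Nonempty := fun v =>
        Finset.card_pos.mp (by rw [hL v]; omega)
      refine ⟨fun v => if v ∈ I then r v else (L v).min' (hne v), ?_, ?_, ?_⟩
      · intro v; by_cases h : v ∈ I <;> simp [h, hr, Finset.min'_mem]
      · intro v hv; simp [hv]
      · intro u hu w hw hadj
        simp only [Finset.union_empty] at hu hw
        exact absurd hadj (hind u hu w hw)
  | @insert a T haT ih =>
      obtain ⟨f, hf1, hf2, hf3⟩ := ih
      by_cases haI : a ∈ I
      · refine ⟨f, hf1, hf2, ?_⟩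
        intro u hu w hw hadj
        have h : ∀ x, x ∈ I ∪ insert a T → x ∈ I ∪ T := by
          intro x hx
          rcases Finset.mem_union.mp hx with h | h
          · exact Finset.mem_union_left _ h
          · rcases Finset.mem_insert.mp h with rfl | h
            · exact Finset.mem_union_left _ haI
            · exact Finset.mem_union_right _ h
        exact hf3 u (h u hu) w (h w hw) hadj
      · have hsub : ¬ L a ⊆ (G.neighborFinset a).image f := by
          intro hs
          have h1 := Finset.card_le_card hs
          have h2 := Finset.card_image_le (s := G.neighborFinset a) (f := f)
          have h3 : (G.neighborFinset a).card = G.degree a := G.card_neighborFinset_eq_degree a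
          have h4 := G.degree_le_maxDegree a
          rw [hL a] at h1; omega
        obtain ⟨c, hc⟩ := Finset.sdiff_nonempty.mpr hsub
        have hcL : c ∈ L a := (Finset.mem_sdiff.mp hc).1
        have hcn : ∀ u, G.Adj a u → f u ≠ c := by
          intro u hu he
          exact (Finset.mem_sdiff.mp hc).2
            (Finset.mem_image.mpr ⟨u, by simpa using hu, he⟩)
        refine ⟨Function.update f a c, ?_, ?_, ?_⟩
        · intro v
          by_cases h : v = a
          · subst h; simpa using hcL
          · rw [Function.update_of_ne h]; exact hf1 v
        · intro v hv
          have : v ≠ a := fun h => haI (h ▸ hv)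
          rw [Function.update_of_ne this]; exact hf2 v hv
        · intro u hu w hw hadj
          have hmem : ∀ x, x ∈ I ∪ insert a T → x = a ∨ x ∈ I ∪ T := by
            intro x hx
            rcases Finset.mem_union.mp hx with h | h
            · exact Or.inr (Finset.mem_union_left _ h)
            · rcases Finset.mem_insert.mp h with rfl | h
              · exact Or.inl rfl
              · exact Or.inr (Finset.mem_union_right _ h)
          by_cases hu' : u = a
          · subst hu'
            have hwa : w ≠ u := hadj.ne'
            rw [Function.update_self, Function.update_of_ne hwa]
            exact fun h => hcn w hadj h.symm
          · by_cases hw' : w = a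
            · subst hw'
              rw [Function.update_self, Function.update_of_ne hu']
              exact hcn u hadj.symm
            · rw [Function.update_of_ne hu', Function.update_of_ne hw']
              exact hf3 u ((hmem u hu).resolve_left hu') w ((hmem w hw).resolve_left hw') hadj

/-- every graph is (Δ(G)+1, ε)-flexible for ε ≤ 1/ρ(G). -/
theorem stmt1 {V : Type*} [Fintype V] [Nonempty V] (G : SimpleGraph V)
    [DecidableRel G.Adj] (ε : ℝ) (hε : ε ≤ 1 / hallRatio G) :
    Flexible G (G.maxDegree + 1) ε := by
  classical
  intro L hL D r hD hr
  -- a maximum independent set in D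
  have hfilne : (D.powerset.filter fun I => ∀ u ∈ I, ∀ w ∈ I, ¬ G.Adj u w).Nonempty :=
    ⟨∅, by simp⟩
  obtain ⟨I, hImem, hIsup⟩ := Finset.exists_mem_eq_sup _ hfilne Finset.card
  rw [Finset.mem_filter, Finset.mem_powerset] at hImem
  obtain ⟨hID, hIind⟩ := hImem
  have hIdef : indepNumOn G D =
      (D.powerset.filter fun I => ∀ u ∈ I, ∀ w ∈ I, ¬ G.Adj u w).sup Finset.card := by
    unfold indepNumOn; congr
  have hIcard : I.card = indepNumOn G D := by rw [hIdef]; exact hIsup.symm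
  -- α(D) ≥ 1
  obtain ⟨v, hv⟩ := hD
  have hα1 : 1 ≤ indepNumOn G D := by
    have : ({v} : Finset V) ∈ D.powerset.filter fun I => ∀ u ∈ I, ∀ w ∈ I, ¬ G.Adj u w := by
      simp [hv, G.irrefl]
    calc 1 = ({v} : Finset V).card := rfl
      _ ≤ _ := Finset.le_sup this
      _ ≤ _ := le_of_eq hIdef.symm
  have hDpos : (0 : ℝ) < D.card := by
    exact_mod_cast Finset.card_pos.mpr ⟨v, hv⟩
  have hαpos : (0 : ℝ) < indepNumOn G D := by exact_mod_cast hα1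
  -- Hall ratio bounds
  set ρ := hallRatio G with hρdef
  have hSfin : {x : ℝ | ∃ S : Finset V, S.Nonempty ∧
      x = (S.card : ℝ) / (indepNumOn G S : ℝ)}.Finite := by
    apply Set.Finite.subset (Set.finite_range
      (fun S : Finset V => (S.card : ℝ) / (indepNumOn G S : ℝ)))
    rintro x ⟨S, _, rfl⟩
    exact ⟨S, rfl⟩
  have hbdd : BddAbove {x : ℝ | ∃ S : Finset V, S.Nonempty ∧
      x = (S.card : ℝ) / (indepNumOn G S : ℝ)} := hSfin.bddAbove
  have hDle : (D.card : ℝ) / (indepNumOn G D : ℝ) ≤ ρ :=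
    le_csSup hbdd ⟨D, ⟨v, hv⟩, rfl⟩
  have hratpos : (0 : ℝ) < (D.card : ℝ) / (indepNumOn G D : ℝ) :=
    div_pos hDpos hαpos
  have hρpos : (0 : ℝ) < ρ := lt_of_lt_of_le hratpos hDle
  have hkey : ε * (D.card : ℝ) ≤ (indepNumOn G D : ℝ) := by
    have h1 : (1 : ℝ) / ρ ≤ (indepNumOn G D : ℝ) / (D.card : ℝ) := by
      rw [div_le_div_iff₀ hρpos hDpos]
      have h2 : (D.card : ℝ) ≤ ρ * (indepNumOn G D : ℝ) := (div_le_iff₀ hαpos).mp hDle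
      nlinarith
    calc ε * (D.card : ℝ) ≤ (1 / ρ) * D.card := by
          exact mul_le_mul_of_nonneg_right hε hDpos.le
      _ ≤ ((indepNumOn G D : ℝ) / D.card) * D.card :=
          mul_le_mul_of_nonneg_right h1 hDpos.le
      _ = (indepNumOn G D : ℝ) := by field_simp
  -- greedy coloring
  obtain ⟨f, hf1, hf2, hf3⟩ := greedy_aux G L hL I hIind r
    (fun w hw => hr w (hID hw)) Finset.univ
  refine ⟨f, ⟨hf1, fun u w hadj => hf3 u (by simp) w (by simp) hadj⟩, ?_⟩
  have hIsub : I ⊆ D.filter fun w => f w = r w := by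
    intro w hw
    exact Finset.mem_filter.mpr ⟨hID hw, hf2 w hw⟩
  calc ε * (D.card : ℝ) ≤ (indepNumOn G D : ℝ) := hkey
    _ = (I.card : ℝ) := by rw [hIcard]
    _ ≤ _ := by exact_mod_cast Finset.card_le_card hIsub
end

section
/- Every d-degenerate graph G is (d+2, 1/2^{d+1})-flexible: for every (d+2)-assignment L for G and every request r of L with domain D, there exists a proper L-coloring of G that colors at least |D|/2^{d+1} of the vertices in D with their requested color. -/
open SimpleGraph Finset

variable {V : Type*}

section
variable {V : Type*} [Fintype V]

open Classical in
noncomputable def Nbh (G : SimpleGraph V) (f : V → ℕ) (v : V) : Finset V :=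
  Finset.univ.filter fun u => G.Adj v u ∧ f u < f v

open Classical in
noncomputable def col (G : SimpleGraph V) (f : V → ℕ) (L : V → Finset ℕ)
    (D : Finset V) (r : V → ℕ) (b : V → Bool) (v : V) : ℕ :=
  let A := L v \ (Nbh G f v).attach.image (fun u => col G f L D r b u.1)
  let c1 := if v ∈ D ∧ r v ∈ A then r v else sInf (A : Set ℕ)
  if b v then c1 else sInf ((A.erase c1 : Finset ℕ) : Set ℕ)
termination_by f v
decreasing_by exact (Finset.mem_filter.mp u.2).2.2

variable (G : SimpleGraph V) (f : V → ℕ) (L : V → Finset ℕ) (D : Finset V) (r : V → ℕ)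

open Classical in
noncomputable def availF (b : V → Bool) (v : V) : Finset ℕ :=
  L v \ (Nbh G f v).attach.image (fun u => col G f L D r b u.1)

open Classical in
noncomputable def cone (b : V → Bool) (v : V) : ℕ :=
  if v ∈ D ∧ r v ∈ availF G f L D r b v then r v else sInf ((availF G f L D r b v : Finset ℕ) : Set ℕ)

open Classical in
lemma col_eq (b : V → Bool) (v : V) :
    col G f L D r b v = if b v then cone G f L D r b v
      else sInf (((availF G f L D r b v).erase (cone G f L D r b v) : Finset ℕ) : Set ℕ) := by
  rw [col]; rfl

lemma mem_Nbh {v u : V} : u ∈ Nbh G f v ↔ G.Adj v u ∧ f u < f v := by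
  classical simp [Nbh]

lemma card_Nbh_le {d : ℕ} (hdeg : ∀ v, ({u | G.Adj v u ∧ f u < f v}).ncard ≤ d) (v : V) :
    (Nbh G f v).card ≤ d := by
  classical
  refine le_trans (le_of_eq ?_) (hdeg v)
  rw [Set.ncard_eq_toFinset_card']
  congr 1
  ext u
  simp [Nbh]

lemma card_avail {d : ℕ} (hdeg : ∀ v, ({u | G.Adj v u ∧ f u < f v}).ncard ≤ d)
    (hL : ∀ v, (L v).card = d + 2) (b : V → Bool) (v : V) :
    2 ≤ (availF G f L D r b v).card := by
  classical
  have h1 : ((Nbh G f v).attach.image (fun u => col G f L D r b u.1)).card ≤ d :=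
    le_trans (Finset.card_image_le.trans (by simp)) (card_Nbh_le G f hdeg v)
  have := Finset.le_card_sdiff ((Nbh G f v).attach.image (fun u => col G f L D r b u.1)) (L v)
  rw [hL v] at this
  rw [availF]
  omega


open Classical in
lemma col_congr (b b' : V → Bool) (v : V) (h : ∀ u, f u ≤ f v → b u = b' u) :
    col G f L D r b v = col G f L D r b' v := by
  have hA : availF G f L D r b v = availF G f L D r b' v := by
    unfold availF
    congr 1
    apply Finset.image_congr
    intro u _
    exact col_congr b b' u.1 (fun w hw =>
      h w (le_trans hw (le_of_lt ((mem_Nbh G f).mp u.2).2)))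
  have hc : cone G f L D r b v = cone G f L D r b' v := by
    unfold cone; rw [hA]
  rw [col_eq, col_eq, hA, hc, h v le_rfl]
termination_by f v
decreasing_by exact ((mem_Nbh G f).mp u.2).2

lemma cone_mem {b : V → Bool} {v : V} (h2 : 2 ≤ (availF G f L D r b v).card) :
    cone G f L D r b v ∈ availF G f L D r b v := by
  have hne : (availF G f L D r b v).Nonempty := Finset.card_pos.mp (by omega)
  rw [cone]
  split
  · exact (by assumption : _ ∧ _).2
  · exact Nat.sInf_mem (by exact_mod_cast hne.to_set)

lemma erase_cone_ne {b : V → Bool} {v : V} (h2 : 2 ≤ (availF G f L D r b v).card) :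
    ((availF G f L D r b v).erase (cone G f L D r b v)).Nonempty := by
  have := Finset.card_erase_of_mem (cone_mem G f L D r h2)
  rw [← Finset.card_pos, this]
  omega

lemma col_mem_avail {b : V → Bool} {v : V} (h2 : 2 ≤ (availF G f L D r b v).card) :
    col G f L D r b v ∈ availF G f L D r b v := by
  rw [col_eq]
  split
  · exact cone_mem G f L D r h2
  · have hne := erase_cone_ne G f L D r h2
    have := Nat.sInf_mem (by exact_mod_cast hne.to_set :
      (((availF G f L D r b v).erase (cone G f L D r b v) : Finset ℕ) : Set ℕ).Nonempty)
    exact Finset.mem_of_mem_erase (by exact_mod_cast this)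

lemma col_false_ne_cone {b : V → Bool} {v : V} (h2 : 2 ≤ (availF G f L D r b v).card)
    (hb : b v = false) : col G f L D r b v ≠ cone G f L D r b v := by
  rw [col_eq, hb]
  simp only [Bool.false_eq_true, if_false]
  have hne := erase_cone_ne G f L D r h2
  have := Nat.sInf_mem (by exact_mod_cast hne.to_set :
    (((availF G f L D r b v).erase (cone G f L D r b v) : Finset ℕ) : Set ℕ).Nonempty)
  have : sInf (((availF G f L D r b v).erase (cone G f L D r b v) : Finset ℕ) : Set ℕ)
      ∈ (availF G f L D r b v).erase (cone G f L D r b v) := by exact_mod_cast this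
  exact Finset.ne_of_mem_erase this

open Classical in
lemma avail_update (b : V → Bool) (u : V) (t : Bool) :
    availF G f L D r (Function.update b u t) u = availF G f L D r b u := by
  unfold availF
  congr 1
  apply Finset.image_congr
  intro w _
  apply col_congr
  intro x hx
  apply Function.update_of_ne
  intro he
  subst he
  exact absurd (lt_of_le_of_lt hx ((mem_Nbh G f).mp w.2).2) (lt_irrefl _)

open Classical in
lemma cone_update (b : V → Bool) (u : V) (t : Bool) :
    cone G f L D r (Function.update b u t) u = cone G f L D r b u := by
  unfold cone; rw [avail_update]

open Classical in
lemma exists_toggle {d : ℕ} (hdeg : ∀ v, ({u | G.Adj v u ∧ f u < f v}).ncard ≤ d)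
    (hL : ∀ v, (L v).card = d + 2) (b : V → Bool) (u : V) (c : ℕ) :
    ∃ t : Bool, col G f L D r (Function.update b u t) u ≠ c := by
  have h2 : ∀ t : Bool, 2 ≤ (availF G f L D r (Function.update b u t) u).card := by
    intro t; exact card_avail G f L D r hdeg hL _ u
  by_cases hc : cone G f L D r b u = c
  · refine ⟨false, ?_⟩
    have h := col_false_ne_cone G f L D r (h2 false) (by simp)
    rw [cone_update] at h
    rw [hc] at h
    exact h
  · refine ⟨true, ?_⟩
    rw [col_eq]
    simp only [Function.update_self, if_true]
    rw [cone_update]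
    exact hc

open Classical in
lemma fix_set {d : ℕ} (hdeg : ∀ v, ({u | G.Adj v u ∧ f u < f v}).ncard ≤ d)
    (hL : ∀ v, (L v).card = d + 2) (hinj : Function.Injective f) (c : ℕ) :
    ∀ (n : ℕ) (S : Finset V), S.card = n → ∀ b : V → Bool, ∃ b' : V → Bool,
      (∀ u, u ∉ S → b' u = b u) ∧ ∀ u ∈ S, col G f L D r b' u ≠ c := by
  intro n
  induction n with
  | zero =>
    intro S hS b
    exact ⟨b, fun _ _ => rfl, by simp [Finset.card_eq_zero.mp hS]⟩
  | succ n ih =>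
    intro S hS b
    have hne : S.Nonempty := by rw [← Finset.card_pos, hS]; omega
    obtain ⟨m, hm, hmax⟩ := S.exists_max_image f hne
    obtain ⟨b1, hb1, hb1'⟩ := ih (S.erase m)
      (by rw [Finset.card_erase_of_mem hm, hS]; rfl) b
    obtain ⟨t, ht⟩ := exists_toggle G f L D r hdeg hL b1 m c
    refine ⟨Function.update b1 m t, ?_, ?_⟩
    · intro u hu
      rw [Function.update_of_ne (fun he => hu (by rw [he]; exact hm)),
        hb1 u (fun h => hu (Finset.mem_of_mem_erase h))]
    · intro u hu
      by_cases h : u = m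
      · subst h; exact ht
      · have hu' : u ∈ S.erase m := Finset.mem_erase.mpr ⟨h, hu⟩
        have heq : col G f L D r (Function.update b1 m t) u = col G f L D r b1 u := by
          apply col_congr
          intro w hw
          apply Function.update_of_ne
          intro he
          have h1 : f u < f m :=
            lt_of_le_of_ne (hmax u hu) (fun he2 => h (hinj he2))
          rw [he] at hw
          omega
        rw [heq]; exact hb1' u hu'

open Classical in
lemma exists_good {d : ℕ} (hdeg : ∀ v, ({u | G.Adj v u ∧ f u < f v}).ncard ≤ d)
    (hL : ∀ v, (L v).card = d + 2) (hinj : Function.Injective f)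
    {v : V} (hv : v ∈ D) (hrv : r v ∈ L v) (b : V → Bool) :
    ∃ b', (∀ u, u ∉ insert v (Nbh G f v) → b' u = b u) ∧ col G f L D r b' v = r v := by
  obtain ⟨b1, hb1, hb1'⟩ := fix_set G f L D r hdeg hL hinj (r v) _ (Nbh G f v) rfl b
  refine ⟨Function.update b1 v true, ?_, ?_⟩
  · intro u hu
    rw [Function.update_of_ne (fun he => hu (by rw [he]; exact Finset.mem_insert_self v _)),
      hb1 u (fun h => hu (Finset.mem_insert_of_mem h))]
  · have hA : availF G f L D r (Function.update b1 v true) v = availF G f L D r b1 v :=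
      avail_update G f L D r b1 v true
    have hrA : r v ∈ availF G f L D r b1 v := by
      rw [availF, Finset.mem_sdiff]
      refine ⟨hrv, ?_⟩
      intro hmem
      obtain ⟨w, _, hw⟩ := Finset.mem_image.mp hmem
      exact hb1' w.1 w.2 hw
    rw [col_eq]
    simp only [Function.update_self, if_true]
    rw [cone_update, cone, if_pos ⟨hv, hrA⟩]

open Classical in
lemma col_ne_earlier {d : ℕ} (hdeg : ∀ v, ({u | G.Adj v u ∧ f u < f v}).ncard ≤ d)
    (hL : ∀ v, (L v).card = d + 2) {b : V → Bool} {u v : V} (hu : u ∈ Nbh G f v) :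
    col G f L D r b v ≠ col G f L D r b u := by
  have h := col_mem_avail G f L D r (card_avail G f L D r hdeg hL b v)
  rw [availF, Finset.mem_sdiff] at h
  intro he
  exact h.2 (Finset.mem_image.mpr ⟨⟨u, hu⟩, Finset.mem_attach _ _, he.symm⟩)

open Classical in
lemma col_mem_L {d : ℕ} (hdeg : ∀ v, ({u | G.Adj v u ∧ f u < f v}).ncard ≤ d)
    (hL : ∀ v, (L v).card = d + 2) (b : V → Bool) (v : V) :
    col G f L D r b v ∈ L v := by
  have h := col_mem_avail G f L D r (card_avail G f L D r hdeg hL b v)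
  rw [availF, Finset.mem_sdiff] at h
  exact h.1

open Classical in
lemma col_proper {d : ℕ} (hdeg : ∀ v, ({u | G.Adj v u ∧ f u < f v}).ncard ≤ d)
    (hL : ∀ v, (L v).card = d + 2) (hinj : Function.Injective f) (b : V → Bool)
    ⦃u w : V⦄ (hadj : G.Adj u w) : col G f L D r b u ≠ col G f L D r b w := by
  rcases lt_trichotomy (f u) (f w) with hlt | heq | hgt
  · exact (col_ne_earlier G f L D r hdeg hL
      ((mem_Nbh G f).mpr ⟨hadj.symm, hlt⟩)).symm
  · exact absurd (hinj heq) hadj.ne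
  · exact col_ne_earlier G f L D r hdeg hL ((mem_Nbh G f).mpr ⟨hadj, hgt⟩)

open Classical in
lemma good_count {d : ℕ} (hdeg : ∀ v, ({u | G.Adj v u ∧ f u < f v}).ncard ≤ d)
    (hL : ∀ v, (L v).card = d + 2) (hinj : Function.Injective f)
    {v : V} (hv : v ∈ D) (hrv : r v ∈ L v) :
    2 ^ Fintype.card V ≤
      2 ^ (d + 1) * (Finset.univ.filter fun b : V → Bool => col G f L D r b v = r v).card := by
  classical
  set P := insert v (Nbh G f v) with hPdef
  have hP : P.card ≤ d + 1 :=
    (Finset.card_insert_le _ _).trans (Nat.succ_le_succ (card_Nbh_le G f hdeg v))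
  have hex : ∀ b : V → Bool, ∃ b', (∀ u, u ∉ P → b' u = b u) ∧ col G f L D r b' v = r v :=
    fun b => exists_good G f L D r hdeg hL hinj hv hrv b
  choose F hF1 hF2 using hex
  have hfiber : ∀ a ∈ Finset.univ.image F,
      ((Finset.univ.filter fun b => F b = a)).card ≤ 2 ^ (d + 1) := by
    intro a _
    have hle : ((Finset.univ.filter fun b => F b = a)).card ≤ Fintype.card (↑P → Bool) := by
      rw [← Finset.card_univ]
      apply Finset.card_le_card_of_injOn (fun b => fun u : ↑P => b u.1)
        (fun _ _ => Finset.mem_univ _)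
      intro b hb b' hb' heq
      simp only [Finset.coe_filter, Set.mem_setOf_eq, Finset.mem_univ, true_and] at hb hb'
      funext u
      by_cases hu : u ∈ P
      · exact congrFun heq ⟨u, hu⟩
      · rw [← hF1 b u hu, ← hF1 b' u hu, hb, hb']
    refine hle.trans ?_
    rw [Fintype.card_fun, Fintype.card_bool, Fintype.card_coe]
    exact Nat.pow_le_pow_right (by norm_num) hP
  have himg : Finset.univ.image F ⊆
      Finset.univ.filter (fun b : V → Bool => col G f L D r b v = r v) := by
    intro a ha
    obtain ⟨b, _, rfl⟩ := Finset.mem_image.mp ha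
    exact Finset.mem_filter.mpr ⟨Finset.mem_univ _, hF2 b⟩
  have h1 : (Finset.univ : Finset (V → Bool)).card ≤ 2 ^ (d + 1) * (Finset.univ.image F).card :=
    Finset.card_le_mul_card_image _ _ hfiber
  have h2 : (Finset.univ : Finset (V → Bool)).card = 2 ^ Fintype.card V := by
    rw [Finset.card_univ, Fintype.card_fun, Fintype.card_bool]
  rw [← h2]
  exact h1.trans (Nat.mul_le_mul_left _ (Finset.card_le_card himg))

end

/-- every d-degenerate graph is (d+2, 1/2^(d+1))-flexible. -/
theorem stmt2 {V : Type*} [Fintype V] (G : SimpleGraph V) (d : ℕ)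
    (h : Degenerate G d) :
    Flexible G (d + 2) (1 / 2 ^ (d + 1)) := by
  classical
  obtain ⟨f, hinj, hdeg⟩ := h
  intro L hL D r hD hr
  have hswap : ∑ v ∈ D, (Finset.univ.filter fun b : V → Bool => col G f L D r b v = r v).card
      = ∑ b : V → Bool, (D.filter fun v => col G f L D r b v = r v).card := by
    simp only [Finset.card_filter]
    exact Finset.sum_comm
  have hkey : D.card * 2 ^ Fintype.card V ≤
      2 ^ (d + 1) * ∑ b : V → Bool, (D.filter fun v => col G f L D r b v = r v).card := by
    rw [← hswap, Finset.mul_sum]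
    calc D.card * 2 ^ Fintype.card V = ∑ _v ∈ D, 2 ^ Fintype.card V := by
          rw [Finset.sum_const, smul_eq_mul]
      _ ≤ _ := Finset.sum_le_sum fun v hv =>
          good_count G f L D r hdeg hL hinj hv (hr v hv)
  obtain ⟨b, _, hb⟩ : ∃ b ∈ (Finset.univ : Finset (V → Bool)),
      D.card ≤ 2 ^ (d + 1) * (D.filter fun v => col G f L D r b v = r v).card := by
    apply Finset.exists_le_of_sum_le Finset.univ_nonempty
    rw [Finset.sum_const, Finset.card_univ, Fintype.card_fun, Fintype.card_bool,
      smul_eq_mul, ← Finset.mul_sum, mul_comm]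
    exact hkey
  refine ⟨col G f L D r b, ⟨fun v => col_mem_L G f L D r hdeg hL b v,
    fun u w hadj => col_proper G f L D r hdeg hL hinj b hadj⟩, ?_⟩
  have hb' : (D.card : ℝ) ≤ 2 ^ (d + 1) *
      ((D.filter fun v => col G f L D r b v = r v).card : ℝ) := by exact_mod_cast hb
  have h2 : (0 : ℝ) < 2 ^ (d + 1) := by positivity
  rw [div_mul_eq_mul_div, div_le_iff₀ h2, one_mul, mul_comm]
  exact hb'
end

section
/- Let G be an s-choosable graph. Then G is (s+1, 1/χ(G²))-flexible, where G² is the square of G: for every (s+1)-assignment L and every request r with domain D, there is a proper L-coloring of G satisfying at least |D|/χ(G²) of the requests. -/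
open SimpleGraph Finset

variable {V : Type*}

/-- an s-choosable graph is (s+1, 1/χ(G²))-flexible. -/
theorem stmt3 {V : Type*} [Fintype V] (G : SimpleGraph V) (s : ℕ)
    (h : Choosable G s) :
    Flexible G (s + 1) (1 / (chromNat (square G) : ℝ)) := by
  classical
  intro L hL D r hD hr
  set n := chromNat (square G) with hn
  obtain ⟨v₀, hv₀⟩ := hD
  have hVne : Nonempty V := ⟨v₀⟩
  obtain ⟨c⟩ := (square G).colorable_chromaticNumber_of_fintype
  have hnpos : 0 < n := by
    have h1 : 0 < (square G).chromaticNumber :=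
      chromaticNumber_pos (square G).colorable_of_fintype
    have h2 : (square G).chromaticNumber ≠ ⊤ :=
      chromaticNumber_ne_top_iff_exists.2 ⟨_, (square G).colorable_of_fintype⟩
    rw [hn, chromNat]
    rcases Nat.eq_zero_or_pos (square G).chromaticNumber.toNat with h0 | h0
    · rcases ENat.toNat_eq_zero.1 h0 with h3 | h3
      · exact absurd h3 h1.ne'
      · exact absurd h3 h2
    · exact h0
  -- pigeonhole: a big color class inside D
  have hsum : ∑ b : Fin n, (D.filter fun v => c v = b).card = D.card :=
    by
      convert (Finset.card_eq_sum_card_fiberwise (s := D) (t := (Finset.univ : Finset (Fin n)))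
        (f := fun v => (c v : Fin n)) (fun v _ => Finset.mem_univ (c v))).symm
      exact Finset.sum_congr rfl fun b _ => by congr
  have hne : (Finset.univ : Finset (Fin n)).Nonempty := by
    simpa [Finset.univ_nonempty_iff] using Fin.pos_iff_nonempty.mp hnpos
  obtain ⟨b, -, hb⟩ : ∃ b ∈ (Finset.univ : Finset (Fin n)),
      (D.card : ℝ) / n ≤ ((D.filter fun v => c v = b).card : ℝ) := by
    apply Finset.exists_le_of_sum_le hne
    have : ∑ _b : Fin n, (D.card : ℝ) / n = D.card := by
      rw [Finset.sum_const, Finset.card_univ, Fintype.card_fin, nsmul_eq_mul]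
      field_simp
    rw [this]
    push_cast [← hsum]
    simp
  set I : Finset V := D.filter (fun v => c v = b) with hI
  have hID : I ⊆ D := Finset.filter_subset _ _
  have hsq : ∀ u ∈ I, ∀ w ∈ I, ¬ (square G).Adj u w := by
    intro u hu w hw hadj
    have := c.valid hadj
    rw [hI, Finset.mem_filter] at hu hw
    exact this (hu.2.trans hw.2.symm)
  have hGsq : ∀ {u w}, G.Adj u w → (square G).Adj u w := by
    intro u w huw
    exact ⟨huw.ne, Or.inl (Or.inl huw)⟩
  have hsq2 : ∀ {u x w}, G.Adj u x → G.Adj x w → u ≠ w → (square G).Adj u w := by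
    intro u x w h1 h2 hne
    exact ⟨hne, Or.inl (Or.inr ⟨x, h1, h2⟩)⟩
  -- request colors of neighbors in I
  set S : V → Finset ℕ := fun v => (I.filter fun u => G.Adj v u).image r with hS
  have hScard : ∀ v, (S v).card ≤ 1 := by
    intro v
    refine le_trans (Finset.card_image_le) (Finset.card_le_one.2 ?_)
    intro u1 h1 u2 h2
    rw [Finset.mem_filter] at h1 h2
    by_contra hne
    exact hsq u1 h1.1 u2 h2.1 (hsq2 h1.2.symm h2.2 hne)
  have hcard : ∀ v, s ≤ (L v \ S v).card := by
    intro v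
    have h1 := Finset.le_card_sdiff (S v) (L v)
    have h2 := hScard v
    have h3 := hL v
    omega
  have hL'ex : ∀ v, ∃ T ⊆ L v \ S v, T.card = s := fun v =>
    Finset.exists_subset_card_eq (hcard v)
  set L' : V → Finset ℕ := fun v =>
    if v ∈ I then Finset.range s else (hL'ex v).choose with hL'
  have hL'card : ∀ v, (L' v).card = s := by
    intro v
    by_cases hv : v ∈ I
    · simp [hL', hv]
    · simpa [hL', hv] using (hL'ex v).choose_spec.2
  have hL'sub : ∀ v, v ∉ I → L' v ⊆ L v \ S v := by
    intro v hv
    have heq : L' v = (hL'ex v).choose := by simp [hL', hv]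
    rw [heq]
    exact (hL'ex v).choose_spec.1
  obtain ⟨g, hg1, hg2⟩ := h L' hL'card
  set f : V → ℕ := fun v => if v ∈ I then r v else g v with hf
  refine ⟨f, ⟨?_, ?_⟩, ?_⟩
  · intro v
    by_cases hv : v ∈ I
    · simpa [hf, hv] using hr v (hID hv)
    · simpa [hf, hv] using (Finset.mem_sdiff.1 (hL'sub v hv (hg1 v))).1
  · intro u w huw
    by_cases hu : u ∈ I <;> by_cases hw : w ∈ I <;>
      simp only [hf, if_pos, if_neg, hu, hw, if_true, if_false]
    · exact absurd (hGsq huw) (hsq u hu w hw)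
    · intro heq
      have : g w ∈ L w \ S w := hL'sub w hw (hg1 w)
      rw [Finset.mem_sdiff] at this
      apply this.2
      rw [hS, ← heq]
      exact Finset.mem_image_of_mem r (Finset.mem_filter.2 ⟨hu, huw.symm⟩)
    · intro heq
      have : g u ∈ L u \ S u := hL'sub u hu (hg1 u)
      rw [Finset.mem_sdiff] at this
      apply this.2
      rw [hS, heq]
      exact Finset.mem_image_of_mem r (Finset.mem_filter.2 ⟨hw, huw⟩)
    · exact hg2 huw
  · have hsub : I ⊆ D.filter fun v => f v = r v := by
      intro v hv
      rw [Finset.mem_filter]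
      exact ⟨hID hv, by rw [hf]; simp [hv]⟩
    have := Finset.card_le_card hsub
    calc 1 / (n : ℝ) * D.card = (D.card : ℝ) / n := by ring
      _ ≤ (I.card : ℝ) := hb
      _ ≤ _ := by exact_mod_cast this
end

section
/- Let G be an s-choosable graph, let L be an (s+k)-assignment for G, and let r be a request of L with domain D such that the requested palette r(D) satisfies |r(D)| ≤ k. Then there exists a proper L-coloring of G that colors at least |D|/χ(G) vertices of D with their requested color. -/
open SimpleGraph Finset

variable {V : Type*}

/-- s-choosable graph, (s+k)-assignment, requested palette of size
at most k: the request is (1/χ(G))-satisfiable. -/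
theorem stmt4 {V : Type*} [Fintype V] (G : SimpleGraph V) (s k : ℕ)
    (hG : Choosable G s) (L : V → Finset ℕ) (hL : ∀ v, (L v).card = s + k)
    (D : Finset V) (r : V → ℕ) (hD : D.Nonempty) (hr : ∀ v ∈ D, r v ∈ L v)
    (hpal : (D.image r).card ≤ k) :
    Satisfiable G L D r (1 / (chromNat G : ℝ)) := by
  classical
  set P := D.image r with hP
  -- trimmed lists of size s avoiding the palette
  have hsub : ∀ v, s ≤ (L v \ P).card := by
    intro v
    have h1 : (L v).card - P.card ≤ (L v \ P).card := Finset.le_card_sdiff _ _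
    have h2 := hL v
    omega
  choose L' hL'sub hL'card using fun v => Finset.exists_subset_card_eq (hsub v)
  obtain ⟨f, hfmem, hfadj⟩ := hG L' hL'card
  have hfP : ∀ v, f v ∉ P := fun v hv =>
    (Finset.mem_sdiff.mp (hL'sub v (hfmem v))).2 hv
  -- a proper coloring with χ colors
  set χ := chromNat G with hχ
  have hcol : G.Colorable χ := G.colorable_chromaticNumber_of_fintype
  obtain ⟨c⟩ := hcol
  have hχpos : 0 < χ := Fin.pos (c hD.choose)
  -- pigeonhole: some color class meets D in ≥ |D|/χ vertices
  have hsum : ∑ i : Fin χ, (D.filter fun v => c v = i).card = D.card :=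
    (Finset.card_eq_sum_card_fiberwise (fun v _ => Finset.mem_univ (c v))).symm
  set m := Finset.univ.sup (fun i : Fin χ => (D.filter fun v => c v = i).card) with hm
  have hDm : D.card ≤ χ * m := by
    calc D.card = ∑ i : Fin χ, (D.filter fun v => c v = i).card := hsum.symm
    _ ≤ Finset.univ.card * m := Finset.sum_le_card_nsmul _ _ m
        (fun i _ => by rw [hm]; exact Finset.le_sup (f := fun i : Fin χ => (D.filter fun v => c v = i).card) (Finset.mem_univ i))
    _ = χ * m := by rw [Finset.card_univ, Fintype.card_fin]
  obtain ⟨i0, -, hi0⟩ := Finset.exists_mem_eq_sup Finset.univ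
    (Finset.univ_nonempty_iff.mpr ⟨⟨0, hχpos⟩⟩)
    (fun i : Fin χ => (D.filter fun v => c v = i).card)
  -- the modified coloring
  set g : V → ℕ := fun v => if v ∈ D ∧ c v = i0 then r v else f v with hg
  refine ⟨g, ⟨?_, ?_⟩, ?_⟩
  · intro v
    by_cases h : v ∈ D ∧ c v = i0
    · simp only [hg, if_pos h]; exact hr v h.1
    · simp only [hg, if_neg h]
      exact (Finset.mem_sdiff.mp (hL'sub v (hfmem v))).1
  · intro u w huw
    by_cases hu : u ∈ D ∧ c u = i0 <;> by_cases hw : w ∈ D ∧ c w = i0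
    · exact absurd (hu.2.trans hw.2.symm) (c.valid huw)
    · simp only [hg, if_pos hu, if_neg hw]
      intro h; exact hfP w (h ▸ Finset.mem_image_of_mem r hu.1)
    · simp only [hg, if_neg hu, if_pos hw]
      intro h; exact hfP u (h ▸ Finset.mem_image_of_mem r hw.1)
    · simp only [hg, if_neg hu, if_neg hw]; exact hfadj huw
  · -- counting
    have hsubset : (D.filter fun v => c v = i0) ⊆ D.filter fun v => g v = r v := by
      intro v hv
      rw [Finset.mem_filter] at hv ⊢
      exact ⟨hv.1, by simp only [hg, if_pos (And.intro hv.1 hv.2)]⟩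
    have hcard : m ≤ (D.filter fun v => g v = r v).card :=
      le_trans (le_of_eq (hm.trans hi0)) (Finset.card_le_card hsubset)
    have h1 : (D.card : ℝ) ≤ (χ : ℝ) * ((D.filter fun v => g v = r v).card : ℝ) := by
      calc (D.card : ℝ) ≤ ((χ * m : ℕ) : ℝ) := Nat.cast_le.mpr hDm
      _ = (χ : ℝ) * (m : ℝ) := by push_cast; ring
      _ ≤ _ := by
          exact mul_le_mul_of_nonneg_left (Nat.cast_le.mpr hcard) (Nat.cast_nonneg _)
    rw [div_mul_eq_mul_div, one_mul, div_le_iff₀ (by exact_mod_cast hχpos)]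
    linarith
end

section
/- Suppose G is a graph, L is a k-assignment for G, and there exists a set S of mk proper L-colorings of G such that for each vertex v ∈ V(G) and each color c ∈ L(v), exactly m of the colorings in S assign c to v. Then for every request r of L with domain D, there is a proper L-coloring of G (in fact, some member of S) that colors at least |D|/k vertices of D with their requested color. -/
open SimpleGraph Finset

variable {V : Type*}

/-- a balanced set of mk proper L-colorings yields a coloring in the
set satisfying at least |D|/k requests. -/
theorem stmt5 {V : Type*} [Fintype V] (G : SimpleGraph V) (L : V → Finset ℕ)
    (k m : ℕ) (hm : 0 < m) (hL : ∀ v, (L v).card = k)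
    (S : Finset (V → ℕ)) (hcard : S.card = m * k)
    (hproper : ∀ f ∈ S, ProperListColoring G L f)
    (hcount : ∀ v, ∀ c ∈ L v, (S.filter fun f => f v = c).card = m)
    (D : Finset V) (r : V → ℕ) (hD : D.Nonempty) (hr : ∀ v ∈ D, r v ∈ L v) :
    ∃ f ∈ S, (1 / (k : ℝ)) * (D.card : ℝ) ≤
      ((D.filter fun v => f v = r v).card : ℝ) := by
  classical
  have hk : 0 < k := by
    obtain ⟨v, hv⟩ := hD
    rw [← hL v]
    exact Finset.card_pos.mpr ⟨r v, hr v hv⟩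
  have hsum : ∑ f ∈ S, (D.filter fun v => f v = r v).card = m * D.card := by
    have h1 : ∑ f ∈ S, (D.filter fun v => f v = r v).card
        = ∑ v ∈ D, (S.filter fun f => f v = r v).card := by
      simp_rw [Finset.card_filter]
      rw [Finset.sum_comm]
    rw [h1, Finset.sum_congr rfl fun v hv => hcount v (r v) (hr v hv)]
    simp [mul_comm]
  by_contra h
  push_neg at h
  have hnat : ∀ f ∈ S, k * (D.filter fun v => f v = r v).card < D.card := by
    intro f hf
    have := h f hf
    have hkr : (0:ℝ) < (k:ℝ) := by exact_mod_cast hk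
    rw [div_mul_eq_mul_div, lt_div_iff₀ hkr] at this
    exact_mod_cast (by nlinarith [this] : ((k:ℝ) * (D.filter fun v => f v = r v).card : ℝ) < D.card)
  have hDpos : 0 < D.card := Finset.card_pos.mpr hD
  obtain ⟨d, hd⟩ : ∃ d, D.card = d + 1 := Nat.exists_eq_succ_of_ne_zero hDpos.ne'
  have hbound : ∑ f ∈ S, k * (D.filter fun v => f v = r v).card ≤ S.card * d := by
    apply Finset.sum_le_card_nsmul
    intro f hf
    have := hnat f hf
    rw [hd] at this
    exact Nat.lt_succ_iff.mp this
  rw [← Finset.mul_sum, hsum, hcard, hd] at hbound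
  have : 0 < m * k := Nat.mul_pos hm hk
  nlinarith [hbound, this]
end

section
/- For every graph G, G is (χ*_ℓ(G), 1/χ*_ℓ(G))-flexible, where χ*_ℓ(G) denotes the list packing number of G: for every χ*_ℓ(G)-assignment L and every request r of L with domain D, there is a proper L-coloring of G satisfying at least |D|/χ*_ℓ(G) of the requests. -/
open SimpleGraph Finset

variable {V : Type*}

/-- every graph is (χ*ₗ(G), 1/χ*ₗ(G))-flexible. -/
theorem stmt6 {V : Type*} [Fintype V] (G : SimpleGraph V) :
    Flexible G (listPackingNumber G) (1 / (listPackingNumber G : ℝ)) := by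
  classical
  intro L hL D r hD hr
  set k := listPackingNumber G with hk
  rcases Nat.eq_zero_or_pos k with hk0 | hkpos
  · -- k = 0: contradiction since D nonempty and lists empty
    obtain ⟨v, hv⟩ := hD
    have := hr v hv
    have : (L v).Nonempty := ⟨r v, this⟩
    rw [← Finset.card_pos, hL v, hk0] at this
    exact absurd this (lt_irrefl 0)
  · -- k ∈ the defining set
    have hmem : k ∈ {k | 0 < k ∧ ∀ L : V → Finset ℕ, (∀ v, (L v).card = k) →
        ∃ f : Fin k → V → ℕ, (∀ i, ProperListColoring G L (f i)) ∧
          ∀ i j, i ≠ j → ∀ v, f i v ≠ f j v} := by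
      apply Nat.sInf_mem
      by_contra hne
      rw [Set.not_nonempty_iff_eq_empty] at hne
      rw [hk, listPackingNumber, hne, Nat.sInf_empty] at hkpos
      exact absurd hkpos (lt_irrefl 0)
    obtain ⟨-, hpack⟩ := hmem
    obtain ⟨f, hf, hdist⟩ := hpack L hL
    -- for each v ∈ D, exactly one i with f i v = r v
    have hkey : ∀ v ∈ D, (Finset.univ.filter fun i : Fin k => f i v = r v).card = 1 := by
      intro v hv
      rw [Finset.card_eq_one]
      have hinj : Function.Injective (fun i : Fin k => f i v) := by
        intro i j h
        by_contra hne
        exact hdist i j hne v h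
      have hmaps : ∀ i : Fin k, f i v ∈ L v := fun i => (hf i).1 v
      -- the map i ↦ f i v is a bijection onto L v
      have hsurj : ∀ c ∈ L v, ∃ i : Fin k, f i v = c := by
        intro c hc
        have himg : (Finset.univ.image fun i : Fin k => f i v) ⊆ L v := by
          intro x hx
          obtain ⟨i, -, rfl⟩ := Finset.mem_image.mp hx
          exact hmaps i
        have hcard : (Finset.univ.image fun i : Fin k => f i v).card = k := by
          rw [Finset.card_image_of_injective _ hinj, Finset.card_univ, Fintype.card_fin]
        have : (Finset.univ.image fun i : Fin k => f i v) = L v :=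
          Finset.eq_of_subset_of_card_le himg (by rw [hcard, hL v])
        rw [← this] at hc
        obtain ⟨i, -, hi⟩ := Finset.mem_image.mp hc
        exact ⟨i, hi⟩
      obtain ⟨i, hi⟩ := hsurj (r v) (hr v hv)
      refine ⟨i, Finset.eq_singleton_iff_unique_mem.mpr ⟨?_, ?_⟩⟩
      · simp [hi]
      · intro j hj
        simp only [Finset.mem_filter] at hj
        exact hinj (hj.2.trans hi.symm)
    -- sum counting
    have hsum : ∑ i : Fin k, (D.filter fun v => f i v = r v).card = D.card := by
      have : ∀ i : Fin k, (D.filter fun v => f i v = r v).card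
          = ∑ v ∈ D, if f i v = r v then 1 else 0 := by
        intro i; rw [Finset.card_filter]
      simp_rw [this]
      rw [Finset.sum_comm]
      have : ∀ v ∈ D, (∑ i : Fin k, if f i v = r v then 1 else 0) = 1 := by
        intro v hv
        rw [← Finset.card_filter]
        exact hkey v hv
      rw [Finset.sum_congr rfl this, Finset.sum_const, smul_eq_mul, mul_one]
    -- pigeonhole
    have hexists : ∃ i : Fin k, D.card ≤ k * (D.filter fun v => f i v = r v).card := by
      by_contra hno
      push_neg at hno
      have : ∑ i : Fin k, k * (D.filter fun v => f i v = r v).card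
          < ∑ _i : Fin k, D.card := by
        apply Finset.sum_lt_sum_of_nonempty
        · exact Finset.univ_nonempty_iff.mpr ⟨⟨0, hkpos⟩⟩
        · intro i _; exact hno i
      rw [← Finset.mul_sum, hsum, Finset.sum_const, Finset.card_univ, Fintype.card_fin,
        smul_eq_mul] at this
      exact absurd this (lt_irrefl _)
    obtain ⟨i, hi⟩ := hexists
    refine ⟨f i, hf i, ?_⟩
    have hkR : (0:ℝ) < (k : ℝ) := by exact_mod_cast hkpos
    rw [div_mul_eq_mul_div, one_mul, div_le_iff₀ hkR]
    have : (D.card : ℝ) ≤ (k : ℝ) * ((D.filter fun v => f i v = r v).card : ℝ) := by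
      exact_mod_cast hi
    linarith
end

section
/- Let G = K_{3,7} with parts X = {x₁,x₂,x₃} and Y = {y₁,...,y₇}. For every 3-assignment L for G and every request r of L whose domain is a single vertex z with r(z) = c ∈ L(z), there exists a proper L-coloring f of G with f(z) = c. -/
open SimpleGraph Finset

variable {V : Type*}

noncomputable def pickElt (S : Finset ℕ) : ℕ := if h : S.Nonempty then h.choose else 0

lemma pickElt_mem {S : Finset ℕ} (h : S.Nonempty) : pickElt S ∈ S := by
  rw [pickElt, dif_pos h]; exact h.choose_spec

lemma card_pair_le (x b : ℕ) : ({x, b} : Finset ℕ).card ≤ 2 :=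
  (Finset.card_insert_le _ _).trans (by simp)

lemma card_triple_le (x b d : ℕ) : ({x, b, d} : Finset ℕ).card ≤ 3 :=
  (Finset.card_insert_le _ _).trans (by have := card_pair_le b d; omega)

lemma key3 (A : Fin 3 → Finset ℕ) (hA : ∀ k, (A k).Nonempty)
    (F : Finset (Finset ℕ)) (hF3 : ∀ s ∈ F, s.card = 3)
    (hF : F.card < (A 0).card * ((A 1).card * (A 2).card)) :
    ∃ w : Fin 3 → ℕ, (∀ k, w k ∈ A k) ∧ ({w 0, w 1, w 2} : Finset ℕ) ∉ F := by
  classical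
  by_cases h01 : (A 0 ∩ A 1).Nonempty
  · obtain ⟨x, hx⟩ := h01
    rw [Finset.mem_inter] at hx
    obtain ⟨d, hd⟩ := hA 2
    refine ⟨![x, x, d], ?_, ?_⟩
    · intro k; fin_cases k <;> simp [hx.1, hx.2, hd]
    · intro hmem
      have h3 := hF3 _ hmem
      have : ({(![x, x, d] : Fin 3 → ℕ) 0, ![x, x, d] 1, ![x, x, d] 2} : Finset ℕ).card ≤ 2 := by
        simp only [Matrix.cons_val_zero, Matrix.cons_val_one, Matrix.head_cons,
          Matrix.cons_val_two, Matrix.tail_cons, Finset.insert_idem]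
        exact card_pair_le x d
      omega
  by_cases h02 : (A 0 ∩ A 2).Nonempty
  · obtain ⟨x, hx⟩ := h02
    rw [Finset.mem_inter] at hx
    obtain ⟨b, hb⟩ := hA 1
    refine ⟨![x, b, x], ?_, ?_⟩
    · intro k; fin_cases k <;> simp [hx.1, hx.2, hb]
    · intro hmem
      have h3 := hF3 _ hmem
      have : ({(![x, b, x] : Fin 3 → ℕ) 0, ![x, b, x] 1, ![x, b, x] 2} : Finset ℕ).card ≤ 2 := by
        simp only [Matrix.cons_val_zero, Matrix.cons_val_one, Matrix.head_cons,
          Matrix.cons_val_two, Matrix.tail_cons]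
        have : ({x, b, x} : Finset ℕ) = {x, b} := by ext y; simp; try tauto
        rw [this]; exact card_pair_le x b
      omega
  by_cases h12 : (A 1 ∩ A 2).Nonempty
  · obtain ⟨x, hx⟩ := h12
    rw [Finset.mem_inter] at hx
    obtain ⟨a, ha⟩ := hA 0
    refine ⟨![a, x, x], ?_, ?_⟩
    · intro k; fin_cases k <;> simp [hx.1, hx.2, ha]
    · intro hmem
      have h3 := hF3 _ hmem
      have : ({(![a, x, x] : Fin 3 → ℕ) 0, ![a, x, x] 1, ![a, x, x] 2} : Finset ℕ).card ≤ 2 := by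
        simp only [Matrix.cons_val_zero, Matrix.cons_val_one, Matrix.head_cons,
          Matrix.cons_val_two, Matrix.tail_cons]
        have : ({a, x, x} : Finset ℕ) = {a, x} := by ext y; simp; try tauto
        rw [this]; exact card_pair_le a x
      omega
  · -- pairwise disjoint case
    have d01 : ∀ x, x ∈ A 0 → x ∈ A 1 → False := fun x hx hy =>
      h01 ⟨x, Finset.mem_inter.mpr ⟨hx, hy⟩⟩
    have d02 : ∀ x, x ∈ A 0 → x ∈ A 2 → False := fun x hx hy =>
      h02 ⟨x, Finset.mem_inter.mpr ⟨hx, hy⟩⟩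
    have d12 : ∀ x, x ∈ A 1 → x ∈ A 2 → False := fun x hx hy =>
      h12 ⟨x, Finset.mem_inter.mpr ⟨hx, hy⟩⟩
    set P : Finset (ℕ × ℕ × ℕ) := (A 0) ×ˢ ((A 1) ×ˢ (A 2)) with hP
    have hinj : Set.InjOn (fun p : ℕ × ℕ × ℕ => ({p.1, p.2.1, p.2.2} : Finset ℕ)) P := by
      rintro ⟨a, b, d⟩ hp ⟨a', b', d'⟩ hq h
      simp only [hP, Finset.coe_product, Set.mem_prod, Finset.mem_coe] at hp hq
      obtain ⟨ha, hb, hd⟩ := hp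
      obtain ⟨ha', hb', hd'⟩ := hq
      simp only at h
      have ha'' : a' ∈ ({a, b, d} : Finset ℕ) := by rw [h]; simp
      have hb'' : b' ∈ ({a, b, d} : Finset ℕ) := by rw [h]; simp
      have hd'' : d' ∈ ({a, b, d} : Finset ℕ) := by rw [h]; simp
      simp only [Finset.mem_insert, Finset.mem_singleton] at ha'' hb'' hd''
      have haa : a' = a := by
        rcases ha'' with h1 | h1 | h1
        · exact h1
        · exact absurd (h1 ▸ ha') (fun hh => d01 b hh hb)
        · exact absurd (h1 ▸ ha') (fun hh => d02 d hh hd)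
      have hbb : b' = b := by
        rcases hb'' with h1 | h1 | h1
        · exact absurd (h1 ▸ hb') (fun hh => d01 a ha hh)
        · exact h1
        · exact absurd (h1 ▸ hb') (fun hh => d12 d hh hd)
      have hdd : d' = d := by
        rcases hd'' with h1 | h1 | h1
        · exact absurd (h1 ▸ hd') (fun hh => d02 a ha hh)
        · exact absurd (h1 ▸ hd') (fun hh => d12 b hb hh)
        · exact h1
      simp [haa, hbb, hdd]
    set T := P.image (fun p : ℕ × ℕ × ℕ => ({p.1, p.2.1, p.2.2} : Finset ℕ)) with hT
    have hTcard : T.card = (A 0).card * ((A 1).card * (A 2).card) := by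
      rw [hT, Finset.card_image_of_injOn hinj, hP]
      simp [Finset.card_product]
    have : ¬ T ⊆ F := by
      intro hsub
      have := Finset.card_le_card hsub
      omega
    obtain ⟨s, hsT, hsF⟩ := Finset.not_subset.mp this
    rw [hT, Finset.mem_image] at hsT
    obtain ⟨⟨a, b, d⟩, hpP, hps⟩ := hsT
    simp only [hP, Finset.mem_product] at hpP
    refine ⟨![a, b, d], ?_, ?_⟩
    · intro k; fin_cases k <;> simp [hpP.1, hpP.2.1, hpP.2.2]
    · simp only [Matrix.cons_val_zero, Matrix.cons_val_one, Matrix.head_cons,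
        Matrix.cons_val_two, Matrix.tail_cons]
      simp only at hps
      rw [hps]; exact hsF

lemma sdiff_ne_nonempty {Lj S : Finset ℕ} (h3 : Lj.card = 3) (hS : S.card ≤ 3)
    (hne : Lj ≠ S) : (Lj \ S).Nonempty := by
  rw [Finset.sdiff_nonempty]
  intro hsub
  exact hne (Finset.eq_of_subset_of_card_le hsub (by omega))

lemma build (L : Fin 3 ⊕ Fin 7 → Finset ℕ)
    (w : Fin 3 → ℕ) (g : Fin 7 → ℕ)
    (hw : ∀ i, w i ∈ L (Sum.inl i))
    (hg : ∀ j, g j ∈ L (Sum.inr j) \ ({w 0, w 1, w 2} : Finset ℕ)) :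
    ProperListColoring (completeBipartiteGraph (Fin 3) (Fin 7)) L (Sum.elim w g) := by
  have hmemw : ∀ i : Fin 3, w i ∈ ({w 0, w 1, w 2} : Finset ℕ) := by
    intro i; fin_cases i <;> simp
  constructor
  · rintro (i | j)
    · exact hw i
    · exact (Finset.mem_sdiff.mp (hg j)).1
  · rintro (i | j) (i' | j') hadj h
    · simp at hadj
    · exact (Finset.mem_sdiff.mp (hg j')).2 (by
        simp only [Sum.elim_inl, Sum.elim_inr] at h
        rw [← h]; exact hmemw i)
    · exact (Finset.mem_sdiff.mp (hg j)).2 (by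
        simp only [Sum.elim_inl, Sum.elim_inr] at h
        rw [h]; exact hmemw i')
    · simp at hadj

/-- in K_{3,7} with 3-lists, any single-vertex request is satisfiable. -/
theorem stmt9 (L : Fin 3 ⊕ Fin 7 → Finset ℕ) (hL : ∀ v, (L v).card = 3)
    (z : Fin 3 ⊕ Fin 7) (c : ℕ) (hc : c ∈ L z) :
    ∃ f, ProperListColoring (completeBipartiteGraph (Fin 3) (Fin 7)) L f ∧
      f z = c := by
  classical
  cases z with
  | inl i =>
    -- forbidden family: all right lists
    set F : Finset (Finset ℕ) :=
      (Finset.univ : Finset (Fin 7)).image (fun j => L (Sum.inr j)) with hF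
    have hFcard : F.card ≤ 7 := (Finset.card_image_le).trans (by simp)
    have hF3 : ∀ s ∈ F, s.card = 3 := by
      intro s hs
      rw [hF, Finset.mem_image] at hs
      obtain ⟨j, _, rfl⟩ := hs
      exact hL _
    set A : Fin 3 → Finset ℕ := fun k => if k = i then ({c} : Finset ℕ) else L (Sum.inl k)
      with hA
    have hAne : ∀ k, (A k).Nonempty := by
      intro k
      simp only [hA]
      by_cases h : k = i
      · rw [if_pos h]; simp
      · rw [if_neg h]
        exact Finset.card_pos.mp (by rw [hL]; omega)
    have hAcard : F.card < (A 0).card * ((A 1).card * (A 2).card) := by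
      have hAk : ∀ k, (A k).card = if k = i then 1 else 3 := by
        intro k
        simp only [hA]
        by_cases h : k = i
        · rw [if_pos h, if_pos h]; simp
        · rw [if_neg h, if_neg h]; exact hL _
      rw [hAk 0, hAk 1, hAk 2]
      fin_cases i <;> simp <;> omega
    obtain ⟨w, hwA, hwF⟩ := key3 A hAne F hF3 hAcard
    have hwL : ∀ k, w k ∈ L (Sum.inl k) := by
      intro k
      have := hwA k
      simp only [hA] at this
      by_cases h : k = i
      · rw [if_pos h, Finset.mem_singleton] at this
        rw [this, h]; exact hc
      · rwa [if_neg h] at this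
    have hwi : w i = c := by
      have := hwA i
      simp only [hA, if_pos rfl, Finset.mem_singleton] at this
      exact this
    have hne : ∀ j : Fin 7, (L (Sum.inr j) \ ({w 0, w 1, w 2} : Finset ℕ)).Nonempty := by
      intro j
      refine sdiff_ne_nonempty (hL _) (card_triple_le _ _ _) ?_
      intro heq
      exact hwF (heq ▸ (Finset.mem_image.mpr ⟨j, Finset.mem_univ j, rfl⟩))
    refine ⟨Sum.elim w (fun j => pickElt (L (Sum.inr j) \ ({w 0, w 1, w 2} : Finset ℕ))),
      build L w _ hwL (fun j => pickElt_mem (hne j)), ?_⟩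
    simpa using hwi
  | inr jz =>
    set F : Finset (Finset ℕ) :=
      ((Finset.univ : Finset (Fin 7)).erase jz).image (fun j => L (Sum.inr j)) with hF
    have hFcard : F.card ≤ 6 := by
      refine (Finset.card_image_le).trans ?_
      rw [Finset.card_erase_of_mem (Finset.mem_univ _)]
      simp
    have hF3 : ∀ s ∈ F, s.card = 3 := by
      intro s hs
      rw [hF, Finset.mem_image] at hs
      obtain ⟨j, _, rfl⟩ := hs
      exact hL _
    set A : Fin 3 → Finset ℕ := fun k => (L (Sum.inl k)).erase c with hA
    have hAc : ∀ k, 2 ≤ (A k).card := by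
      intro k
      have := Finset.pred_card_le_card_erase (s := L (Sum.inl k)) (a := c)
      rw [hL] at this
      simp only [hA]; omega
    have hAne : ∀ k, (A k).Nonempty := fun k => Finset.card_pos.mp (by have := hAc k; omega)
    have hAcard : F.card < (A 0).card * ((A 1).card * (A 2).card) := by
      have h0 := hAc 0; have h1 := hAc 1; have h2 := hAc 2
      have : 2 * (2 * 2) ≤ (A 0).card * ((A 1).card * (A 2).card) :=
        Nat.mul_le_mul h0 (Nat.mul_le_mul h1 h2)
      omega
    obtain ⟨w, hwA, hwF⟩ := key3 A hAne F hF3 hAcard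
    have hwL : ∀ k, w k ∈ L (Sum.inl k) := fun k => Finset.mem_of_mem_erase (hwA k)
    have hwc : ∀ k, w k ≠ c := fun k => Finset.ne_of_mem_erase (hwA k)
    have hne : ∀ j : Fin 7, j ≠ jz →
        (L (Sum.inr j) \ ({w 0, w 1, w 2} : Finset ℕ)).Nonempty := by
      intro j hj
      refine sdiff_ne_nonempty (hL _) (card_triple_le _ _ _) ?_
      intro heq
      exact hwF (heq ▸ (Finset.mem_image.mpr ⟨j, Finset.mem_erase.mpr ⟨hj, Finset.mem_univ j⟩, rfl⟩))
    set g : Fin 7 → ℕ := fun j =>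
      if j = jz then c else pickElt (L (Sum.inr j) \ ({w 0, w 1, w 2} : Finset ℕ)) with hg
    have hgmem : ∀ j, g j ∈ L (Sum.inr j) \ ({w 0, w 1, w 2} : Finset ℕ) := by
      intro j
      rw [hg]
      by_cases h : j = jz
      · simp only [if_pos h]
        rw [Finset.mem_sdiff]
        refine ⟨h ▸ hc, ?_⟩
        simp only [Finset.mem_insert, Finset.mem_singleton]
        push_neg
        exact ⟨(hwc 0).symm, (hwc 1).symm, (hwc 2).symm⟩
      · simp only [if_neg h]
        exact pickElt_mem (hne j h)
    refine ⟨Sum.elim w g, build L w g hwL hgmem, ?_⟩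
    simp [hg]
end

section
/- The graph K_{3,7} is (3, 1/10)-flexible: for every 3-assignment L for K_{3,7} and every request r of L with domain D, there exists a proper L-coloring of K_{3,7} that colors at least |D|/10 of the vertices of D with their requested color. -/
open SimpleGraph Finset

variable {V : Type*}

lemma lemA (A1 A2 A3 : Finset ℕ) (F : Finset (Finset ℕ))
    (hA1 : A1.Nonempty) (hA2 : A2.Nonempty) (hA3 : A3.Nonempty)
    (hF : ∀ S ∈ F, S.card = 3)
    (hcount : F.card < A1.card * A2.card * A3.card) :
    ∃ c1 ∈ A1, ∃ c2 ∈ A2, ∃ c3 ∈ A3, ∀ S ∈ F, ¬ S ⊆ {c1, c2, c3} := by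
  classical
  have small : ∀ (x y : ℕ) (T : Finset ℕ), T = {x, y} →
      ∀ S ∈ F, ¬ S ⊆ T := by
    intro x y T hT S hS hsub
    have h3 := hF S hS
    have := Finset.card_le_card hsub
    have : T.card ≤ 2 := by
      rw [hT]
      exact (Finset.card_insert_le _ _).trans (by simp)
    omega
  by_cases h12 : (A1 ∩ A2).Nonempty
  · obtain ⟨x, hx⟩ := h12
    obtain ⟨z, hz⟩ := hA3
    exact ⟨x, (Finset.mem_inter.1 hx).1, x, (Finset.mem_inter.1 hx).2, z, hz,
      small x z _ (by simp) ⟩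
  by_cases h13 : (A1 ∩ A3).Nonempty
  · obtain ⟨x, hx⟩ := h13
    obtain ⟨y, hy⟩ := hA2
    refine ⟨x, (Finset.mem_inter.1 hx).1, y, hy, x, (Finset.mem_inter.1 hx).2,
      small x y _ ?_⟩
    ext a; simp; try tauto
  by_cases h23 : (A2 ∩ A3).Nonempty
  · obtain ⟨y, hy⟩ := h23
    obtain ⟨x, hx⟩ := hA1
    refine ⟨x, hx, y, (Finset.mem_inter.1 hy).1, y, (Finset.mem_inter.1 hy).2,
      small x y _ ?_⟩
    ext a; simp; try tauto
  -- pairwise disjoint case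
  have d12 : ∀ a ∈ A1, a ∉ A2 := by
    intro a ha ha'; exact h12 ⟨a, Finset.mem_inter.2 ⟨ha, ha'⟩⟩
  have d13 : ∀ a ∈ A1, a ∉ A3 := by
    intro a ha ha'; exact h13 ⟨a, Finset.mem_inter.2 ⟨ha, ha'⟩⟩
  have d23 : ∀ a ∈ A2, a ∉ A3 := by
    intro a ha ha'; exact h23 ⟨a, Finset.mem_inter.2 ⟨ha, ha'⟩⟩
  set P : Finset (ℕ × ℕ × ℕ) := A1 ×ˢ A2 ×ˢ A3 with hP
  set φ : ℕ × ℕ × ℕ → Finset ℕ := fun p => {p.1, p.2.1, p.2.2} with hφ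
  have hinj : Set.InjOn φ P := by
    intro p hp q hq heq
    simp only [hP, Finset.mem_coe, Finset.mem_product] at hp hq
    obtain ⟨hp1, hp2, hp3⟩ := hp
    obtain ⟨hq1, hq2, hq3⟩ := hq
    have key : ∀ a ∈ A1, ∀ b ∈ A2, ∀ c ∈ A3, ∀ a' ∈ A1, ∀ b' ∈ A2, ∀ c' ∈ A3,
        ({a, b, c} : Finset ℕ) = {a', b', c'} → a = a' ∧ b = b' ∧ c = c' := by
      intro a ha b hb c hc a' ha' b' hb' c' hc' h
      have hma : a ∈ ({a', b', c'} : Finset ℕ) := h ▸ (by simp)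
      have hmb : b ∈ ({a', b', c'} : Finset ℕ) := h ▸ (by simp)
      have hmc : c ∈ ({a', b', c'} : Finset ℕ) := h ▸ (by simp)
      simp only [Finset.mem_insert, Finset.mem_singleton] at hma hmb hmc
      refine ⟨?_, ?_, ?_⟩
      · rcases hma with h | h | h
        · exact h
        · exact absurd (h ▸ ha) fun hh => d12 _ hh hb'
        · exact absurd (h ▸ ha) fun hh => d13 _ hh hc'
      · rcases hmb with h | h | h
        · exact absurd (h ▸ hb) (d12 _ ha')
        · exact h
        · exact absurd (h ▸ hb) fun hh => d23 _ hh hc'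
      · rcases hmc with h | h | h
        · exact absurd (h ▸ hc) (d13 _ ha')
        · exact absurd (h ▸ hc) (d23 _ hb')
        · exact h
    obtain ⟨e1, e2, e3⟩ := key p.1 hp1 p.2.1 hp2 p.2.2 hp3 q.1 hq1 q.2.1 hq2 q.2.2 hq3 heq
    exact Prod.ext e1 (Prod.ext e2 e3)
  have hcard : (P.image φ).card = A1.card * A2.card * A3.card := by
    rw [Finset.card_image_of_injOn hinj, hP]
    simp [Finset.card_product, mul_assoc]
  have hex : ∃ t ∈ P.image φ, t ∉ F := by
    by_contra h
    push_neg at h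
    have : P.image φ ⊆ F := h
    have := Finset.card_le_card this
    omega
  obtain ⟨t, ht, htF⟩ := hex
  obtain ⟨p, hp, hpt⟩ := Finset.mem_image.1 ht
  simp only [hP, Finset.mem_product] at hp
  obtain ⟨hp1, hp2, hp3⟩ := hp
  refine ⟨p.1, hp1, p.2.1, hp2, p.2.2, hp3, ?_⟩
  intro S hS hsub
  have hne12 : p.1 ≠ p.2.1 := fun h => d12 _ hp1 (h ▸ hp2)
  have hne13 : p.1 ≠ p.2.2 := fun h => d13 _ hp1 (h ▸ hp3)
  have hne23 : p.2.1 ≠ p.2.2 := fun h => d23 _ hp2 (h ▸ hp3)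
  have hc3 : ({p.1, p.2.1, p.2.2} : Finset ℕ).card = 3 := by
    rw [Finset.card_insert_of_notMem (by simp [hne12, hne13]),
      Finset.card_insert_of_notMem (by simp [hne23]), Finset.card_singleton]
  have hSeq : S = ({p.1, p.2.1, p.2.2} : Finset ℕ) :=
    Finset.eq_of_subset_of_card_le hsub (by rw [hc3, hF S hS])
  refine htF ?_
  rw [← hpt]
  show ({p.1, p.2.1, p.2.2} : Finset ℕ) ∈ F
  rw [← hSeq]; exact hS

lemma buildColoring (L : (Fin 3 ⊕ Fin 7) → Finset ℕ) (c1 c2 c3 : ℕ)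
    (h1 : c1 ∈ L (Sum.inl 0)) (h2 : c2 ∈ L (Sum.inl 1)) (h3 : c3 ∈ L (Sum.inl 2))
    (g : Fin 7 → ℕ) (hg : ∀ j, g j ∈ L (Sum.inr j) ∧ g j ∉ ({c1, c2, c3} : Finset ℕ)) :
    ProperListColoring (completeBipartiteGraph (Fin 3) (Fin 7)) L
      (Sum.elim (![c1, c2, c3]) g) := by
  constructor
  · rintro (i | j)
    · fin_cases i <;> simpa
    · exact (hg j).1
  · rintro (i | j) (i' | j') hadj <;>
      simp only [completeBipartiteGraph_adj, Sum.isLeft_inl, Sum.isRight_inl,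
        Sum.isLeft_inr, Sum.isRight_inr] at hadj
    · simp at hadj
    · have hmem : (![c1, c2, c3]) i ∈ ({c1, c2, c3} : Finset ℕ) := by
        fin_cases i <;> simp
      simp only [Sum.elim_inl, Sum.elim_inr]
      intro h
      exact (hg j').2 (h ▸ hmem)
    · have hmem : (![c1, c2, c3]) i' ∈ ({c1, c2, c3} : Finset ℕ) := by
        fin_cases i' <;> simp
      simp only [Sum.elim_inl, Sum.elim_inr]
      intro h
      exact (hg j).2 (by rwa [← h] at hmem)
    · simp at hadj

lemma leftCase (L : (Fin 3 ⊕ Fin 7) → Finset ℕ) (hL : ∀ v, (L v).card = 3)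
    (i0 : Fin 3) (c : ℕ) (hc : c ∈ L (Sum.inl i0)) :
    ∃ f, ProperListColoring (completeBipartiteGraph (Fin 3) (Fin 7)) L f ∧
      f (Sum.inl i0) = c := by
  classical
  set A : Fin 3 → Finset ℕ := fun i => if i = i0 then {c} else L (Sum.inl i) with hA
  have hAsub : ∀ i, A i ⊆ L (Sum.inl i) := by
    intro i x hx
    rcases eq_or_ne i i0 with h | h
    · subst h; simp [hA] at hx; subst hx; exact hc
    · simpa [hA, h] using hx
  have hAne : ∀ i, (A i).Nonempty := by
    intro i
    rcases eq_or_ne i i0 with h | h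
    · subst h; simp [hA]
    · rw [← Finset.card_pos]; simp [hA, h, hL]
  set F : Finset (Finset ℕ) := Finset.univ.image (fun j : Fin 7 => L (Sum.inr j)) with hFdef
  have hF : ∀ S ∈ F, S.card = 3 := by
    intro S hS
    obtain ⟨j, _, rfl⟩ := Finset.mem_image.1 hS
    exact hL _
  have hcount : F.card < (A 0).card * (A 1).card * (A 2).card := by
    have h7 : F.card ≤ 7 := Finset.card_image_le.trans (by simp)
    have hcA : ∀ i, (A i).card = if i = i0 then 1 else 3 := by
      intro i; rcases eq_or_ne i i0 with h | h <;> simp [hA, h, hL]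
    have h9 : (A 0).card * (A 1).card * (A 2).card = 9 := by
      rw [hcA 0, hcA 1, hcA 2]
      fin_cases i0 <;> simp
    omega
  obtain ⟨c1, hc1, c2, hc2, c3, hc3, hforb⟩ := lemA (A 0) (A 1) (A 2) F
    (hAne 0) (hAne 1) (hAne 2) hF hcount
  have hmem : ∀ i, (![c1, c2, c3]) i ∈ A i := by
    intro i; fin_cases i <;> simpa
  have hgj : ∀ j, (L (Sum.inr j) \ {c1, c2, c3}).Nonempty := by
    intro j
    rw [Finset.sdiff_nonempty]
    exact hforb (L (Sum.inr j)) (Finset.mem_image.2 ⟨j, Finset.mem_univ _, rfl⟩)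
  set g : Fin 7 → ℕ := fun j => (hgj j).choose with hg
  have hgspec : ∀ j, g j ∈ L (Sum.inr j) ∧ g j ∉ ({c1, c2, c3} : Finset ℕ) := by
    intro j
    have := (hgj j).choose_spec
    rw [Finset.mem_sdiff] at this
    exact this
  refine ⟨Sum.elim (![c1, c2, c3]) g,
    buildColoring L c1 c2 c3 (hAsub 0 hc1) (hAsub 1 hc2) (hAsub 2 hc3) g hgspec, ?_⟩
  have := hmem i0
  rw [hA] at this
  simp only [if_pos rfl, Finset.mem_singleton] at this
  simpa using this

lemma rightCase (L : (Fin 3 ⊕ Fin 7) → Finset ℕ) (hL : ∀ v, (L v).card = 3)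
    (j0 : Fin 7) (c : ℕ) (hc : c ∈ L (Sum.inr j0)) :
    ∃ f, ProperListColoring (completeBipartiteGraph (Fin 3) (Fin 7)) L f ∧
      f (Sum.inr j0) = c := by
  classical
  set A : Fin 3 → Finset ℕ := fun i => L (Sum.inl i) \ {c} with hA
  have hAcard : ∀ i, 2 ≤ (A i).card := by
    intro i
    have h := Finset.card_le_card_sdiff_add_card (s := L (Sum.inl i)) (t := {c})
    rw [hL] at h
    simp only [Finset.card_singleton] at h
    simp only [hA]
    omega
  have hAne : ∀ i, (A i).Nonempty := fun i =>
    Finset.card_pos.1 (by have := hAcard i; omega)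
  set F : Finset (Finset ℕ) := (Finset.univ.erase j0).image (fun j : Fin 7 => L (Sum.inr j))
    with hFdef
  have hF : ∀ S ∈ F, S.card = 3 := by
    intro S hS
    obtain ⟨j, _, rfl⟩ := Finset.mem_image.1 hS
    exact hL _
  have hcount : F.card < (A 0).card * (A 1).card * (A 2).card := by
    have h6 : F.card ≤ 6 := Finset.card_image_le.trans (by
      rw [Finset.card_erase_of_mem (Finset.mem_univ _)]; simp)
    have h8 : 8 ≤ (A 0).card * (A 1).card * (A 2).card := by
      calc (8 : ℕ) = 2 * 2 * 2 := by norm_num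
      _ ≤ _ := Nat.mul_le_mul (Nat.mul_le_mul (hAcard 0) (hAcard 1)) (hAcard 2)
    omega
  obtain ⟨c1, hc1, c2, hc2, c3, hc3, hforb⟩ := lemA (A 0) (A 1) (A 2) F
    (hAne 0) (hAne 1) (hAne 2) hF hcount
  rw [hA, Finset.mem_sdiff] at hc1 hc2 hc3
  have hcnot : c ∉ ({c1, c2, c3} : Finset ℕ) := by
    simp only [Finset.mem_insert, Finset.mem_singleton, not_or]
    refine ⟨?_, ?_, ?_⟩
    · intro h; exact hc1.2 (by simp [h])
    · intro h; exact hc2.2 (by simp [h])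
    · intro h; exact hc3.2 (by simp [h])
  have hgj : ∀ j, j ≠ j0 → (L (Sum.inr j) \ {c1, c2, c3}).Nonempty := by
    intro j hj
    rw [Finset.sdiff_nonempty]
    exact hforb (L (Sum.inr j))
      (Finset.mem_image.2 ⟨j, Finset.mem_erase.2 ⟨hj, Finset.mem_univ _⟩, rfl⟩)
  set g : Fin 7 → ℕ := fun j => if h : j = j0 then c else (hgj j h).choose with hg
  have hgspec : ∀ j, g j ∈ L (Sum.inr j) ∧ g j ∉ ({c1, c2, c3} : Finset ℕ) := by
    intro j
    rcases eq_or_ne j j0 with h | h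
    · subst h; simp only [hg, dif_pos rfl]; exact ⟨hc, hcnot⟩
    · have := (hgj j h).choose_spec
      rw [Finset.mem_sdiff] at this
      simpa only [hg, dif_neg h] using this
  refine ⟨Sum.elim (![c1, c2, c3]) g,
    buildColoring L c1 c2 c3 hc1.1 hc2.1 hc3.1 g hgspec, ?_⟩
  simp [hg]

/-- K_{3,7} is (3, 1/10)-flexible. -/
theorem stmt10 :
    Flexible (completeBipartiteGraph (Fin 3) (Fin 7)) 3 ((1 : ℝ) / 10) := by
  classical
  intro L hL D r hD hr
  obtain ⟨v0, hv0⟩ := hD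
  have hrv0 : r v0 ∈ L v0 := hr v0 hv0
  have key : ∃ f, ProperListColoring (completeBipartiteGraph (Fin 3) (Fin 7)) L f ∧
      f v0 = r v0 := by
    rcases v0 with i0 | j0
    · exact leftCase L hL i0 (r (Sum.inl i0)) hrv0
    · exact rightCase L hL j0 (r (Sum.inr j0)) hrv0
  obtain ⟨f, hf, hfv0⟩ := key
  refine ⟨f, hf, ?_⟩
  have h1 : 1 ≤ (D.filter fun v => f v = r v).card :=
    Finset.card_pos.2 ⟨v0, Finset.mem_filter.2 ⟨hv0, hfv0⟩⟩
  have h10 : D.card ≤ 10 := by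
    have := Finset.card_le_univ D
    simpa using this
  have hr1 : (1 : ℝ) ≤ ((D.filter fun v => f v = r v).card : ℝ) := by exact_mod_cast h1
  have hr2 : (D.card : ℝ) ≤ 10 := by exact_mod_cast h10
  linarith
end

section
/- For every n ≥ 1 and every 3-assignment L of the grid P_n □ P_m, there is a set C of 3·2^{m−1} proper L-colorings such that for every vertex v and every color c ∈ L(v), exactly one third of the colorings in C (i.e., 2^{m−1} of them) assign c to v. -/
open SimpleGraph Finset

variable {V : Type*}

lemma hallStep {k : ℕ} (hk : 2 ≤ k) (B : Finset ℕ) (hB : B.card = k)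
    (c : Fin k → ℕ) (hc : Function.Injective c) :
    ∃ d : Fin k → ℕ, Function.Injective d ∧ ∀ s, d s ∈ B.erase (c s) := by
  classical
  rw [← Finset.all_card_le_biUnion_card_iff_exists_injective]
  intro s
  by_contra hcon
  push_neg at hcon
  set U := s.biUnion (fun i => B.erase (c i)) with hU
  -- s is nonempty
  obtain ⟨a, ha⟩ : s.Nonempty := by
    rcases s.eq_empty_or_nonempty with h | h
    · simp [h] at hcon
    · exact h
  have hta : B.erase (c a) ⊆ U := Finset.subset_biUnion_of_mem (fun i => B.erase (c i)) ha
  have hcard_ta : k - 1 ≤ (B.erase (c a)).card := by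
    simpa [hB] using Finset.pred_card_le_card_erase (s := B) (a := c a)
  have hUk : k - 1 ≤ U.card := hcard_ta.trans (Finset.card_le_card hta)
  have hsk : s.card ≤ k := by
    simpa using Finset.card_le_card (Finset.subset_univ s)
  have h2 : 1 < s.card := by omega
  obtain ⟨a, ha, b, hb, hab⟩ := Finset.one_lt_card.mp h2
  -- U.card < s.card ≤ k, so U.card = k-1 and each erase equals U
  have key : ∀ x ∈ s, c x ∈ B ∧ B.erase (c x) = U := by
    intro x hx
    have htx : B.erase (c x) ⊆ U := Finset.subset_biUnion_of_mem (fun i => B.erase (c i)) hx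
    have h1 : k - 1 ≤ (B.erase (c x)).card := by
      simpa [hB] using Finset.pred_card_le_card_erase (s := B) (a := c x)
    have hUcard : U.card ≤ k - 1 := by omega
    have heq : B.erase (c x) = U :=
      Finset.eq_of_subset_of_card_le htx (by omega)
    have hmem : c x ∈ B := by
      by_contra hmem
      have : B.erase (c x) = B := Finset.erase_eq_of_notMem hmem
      rw [this] at heq
      have := heq ▸ hB
      omega
    exact ⟨hmem, heq⟩
  obtain ⟨hma, hea⟩ := key a ha
  obtain ⟨hmb, heb⟩ := key b hb
  have : c a = c b := by
    have h1 : c a ∉ B.erase (c b) := by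
      rw [heb, ← hea]; exact Finset.notMem_erase _ _
    by_contra hne
    exact h1 (Finset.mem_erase.mpr ⟨hne, hma⟩)
  exact hab (hc this)

noncomputable def packSeq {k : ℕ} (hk : 2 ≤ k) (B' : ℕ → Finset ℕ)
    (hB' : ∀ j, (B' j).card = k) :
    (j : ℕ) → {d : Fin k → ℕ // Function.Injective d ∧ ∀ s, d s ∈ B' j}
  | 0 =>
    let e := hallStep hk (B' 0) (hB' 0) (fun s => s.val)
      (fun a b hab => Fin.ext hab)
    ⟨e.choose, e.choose_spec.1, fun s => Finset.mem_of_mem_erase (e.choose_spec.2 s)⟩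
  | j+1 =>
    let p := packSeq hk B' hB' j
    let e := hallStep hk (B' (j+1)) (hB' (j+1)) p.1 p.2.1
    ⟨e.choose, e.choose_spec.1, fun s => Finset.mem_of_mem_erase (e.choose_spec.2 s)⟩

lemma packSeq_succ_ne {k : ℕ} (hk : 2 ≤ k) (B' : ℕ → Finset ℕ)
    (hB' : ∀ j, (B' j).card = k) (j : ℕ) (s : Fin k) :
    (packSeq hk B' hB' (j+1)).1 s ≠ (packSeq hk B' hB' j).1 s := by
  have h := (hallStep hk (B' (j+1)) (hB' (j+1)) (packSeq hk B' hB' j).1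
      (packSeq hk B' hB' j).2.1).choose_spec.2 s
  have h2 : (packSeq hk B' hB' (j+1)).1 s ∈
      (B' (j+1)).erase ((packSeq hk B' hB' j).1 s) := by
    exact h
  exact Finset.ne_of_mem_erase h2

lemma pathPack {k : ℕ} (hk : 2 ≤ k) {n : ℕ} (B : Fin n → Finset ℕ)
    (hB : ∀ i, (B i).card = k) :
    ∃ h : Fin k → Fin n → ℕ, (∀ s i, h s i ∈ B i) ∧
      (∀ i, Function.Injective fun s => h s i) ∧
      (∀ s i i', (SimpleGraph.pathGraph n).Adj i i' → h s i ≠ h s i') := by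
  classical
  set B' : ℕ → Finset ℕ := fun j => if h : j < n then B ⟨j, h⟩ else Finset.range k with hB'def
  have hB' : ∀ j, (B' j).card = k := by
    intro j
    simp only [hB'def]
    split
    · apply hB
    · simp
  refine ⟨fun s i => (packSeq hk B' hB' i.val).1 s, ?_, ?_, ?_⟩
  · intro s i
    have := (packSeq hk B' hB' i.val).2.2 s
    simpa [hB'def, i.isLt] using this
  · intro i
    exact (packSeq hk B' hB' i.val).2.1
  · intro s i i' hadj
    rw [SimpleGraph.pathGraph_adj] at hadj
    rcases hadj with h | h
    · have := packSeq_succ_ne hk B' hB' i.val s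
      rw [h] at this
      exact this.symm
    · have := packSeq_succ_ne hk B' hB' i'.val s
      rw [h] at this
      exact this

lemma psiExists (A Bv : Finset ℕ) (h : A.card = Bv.card) :
    ∃ ψ : ℕ → ℕ, (∀ c ∈ A, ψ c ∈ Bv) ∧ Set.InjOn ψ A ∧
      (∀ c ∈ A, c ∈ Bv → ψ c = c) ∧ A.image ψ = Bv := by
  classical
  have hcard : (A \ Bv).card = (Bv \ A).card := by
    have h1 := Finset.card_sdiff_add_card_inter A Bv
    have h2 := Finset.card_sdiff_add_card_inter Bv A
    rw [Finset.inter_comm] at h2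
    omega
  let e := Finset.equivOfCardEq hcard
  set ψ : ℕ → ℕ := fun c => if hc : c ∈ A \ Bv then (e ⟨c, hc⟩ : ℕ) else c with hψ
  have hpos : ∀ (c : ℕ) (hc : c ∈ A \ Bv), ψ c = (e ⟨c, hc⟩ : ℕ) := by
    intro c hc
    simp only [hψ]
    rw [dif_pos hc]
  have hneg : ∀ (c : ℕ), c ∉ A \ Bv → ψ c = c := by
    intro c hc
    simp only [hψ]
    rw [dif_neg hc]
  have hmem : ∀ c ∈ A, ψ c ∈ Bv := by
    intro c hc
    by_cases hc2 : c ∈ A \ Bv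
    · rw [hpos c hc2]
      exact (Finset.mem_sdiff.mp (e ⟨c, hc2⟩).2).1
    · have hcb : c ∈ Bv := by
        by_contra hcb
        exact hc2 (Finset.mem_sdiff.mpr ⟨hc, hcb⟩)
      rw [hneg c hc2]
      exact hcb
  have hinj : Set.InjOn ψ A := by
    intro x hx y hy hxy
    by_cases hx2 : x ∈ A \ Bv <;> by_cases hy2 : y ∈ A \ Bv
    · rw [hpos x hx2, hpos y hy2] at hxy
      exact congrArg Subtype.val (e.injective (Subtype.ext hxy))
    · rw [hpos x hx2, hneg y hy2] at hxy
      have h1 : (e ⟨x, hx2⟩ : ℕ) ∈ Bv \ A := (e ⟨x, hx2⟩).2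
      rw [hxy] at h1
      exact absurd (Finset.mem_coe.mp hy) (Finset.mem_sdiff.mp h1).2
    · rw [hneg x hx2, hpos y hy2] at hxy
      have h1 : (e ⟨y, hy2⟩ : ℕ) ∈ Bv \ A := (e ⟨y, hy2⟩).2
      rw [← hxy] at h1
      exact absurd (Finset.mem_coe.mp hx) (Finset.mem_sdiff.mp h1).2
    · rw [hneg x hx2, hneg y hy2] at hxy
      exact hxy
  refine ⟨ψ, hmem, hinj, ?_, ?_⟩
  · intro c hcA hcB
    exact hneg c (by simp [hcB])
  · apply Finset.eq_of_subset_of_card_le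
    · intro x hx
      obtain ⟨c, hc, rfl⟩ := Finset.mem_image.mp hx
      exact hmem c hc
    · rw [Finset.card_image_of_injOn hinj]
      omega

lemma card_filter_pair {α : Type*} [DecidableEq α] {a b : α} (hab : a ≠ b)
    (P : α → Prop) [DecidablePred P] :
    (({a, b} : Finset α).filter P).card
      = (if P a then 1 else 0) + (if P b then 1 else 0) := by
  rw [Finset.filter_insert, Finset.filter_singleton]
  by_cases ha : P a <;> by_cases hb : P b <;>
    simp [ha, hb, Finset.card_insert_of_notMem, hab]

lemma gridAux {n : ℕ} (hn : 1 ≤ n) : ∀ m : ℕ, 1 ≤ m →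
    ∀ L : Fin n → ℕ → Finset ℕ, (∀ i j, j < m → (L i j).card = 3) →
    ∃ C : Finset (Fin n → ℕ → ℕ),
      C.card = 3 * 2 ^ (m - 1) ∧
      (∀ g ∈ C, ∀ i j, m ≤ j → g i j = 0) ∧
      (∀ g ∈ C, ∀ i (j : ℕ), j < m → g i j ∈ L i j) ∧
      (∀ g ∈ C, ∀ i (j : ℕ), j + 1 < m → g i j ≠ g i (j+1)) ∧
      (∀ g ∈ C, ∀ i i' (j : ℕ), j < m →
        (SimpleGraph.pathGraph n).Adj i i' → g i j ≠ g i' j) ∧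
      (∀ i (j : ℕ), j < m → ∀ c ∈ L i j,
        (C.filter fun g => g i j = c).card = 2 ^ (m-1)) := by
  classical
  intro m hm
  induction m, hm using Nat.le_induction with
  | base =>
    intro L hL
    obtain ⟨h, hmem, hinj, hprop⟩ := pathPack (k := 3) (by norm_num)
      (fun i => L i 0) (fun i => hL i 0 (by norm_num))
    set gg : Fin 3 → (Fin n → ℕ → ℕ) :=
      fun s i j => if j = 0 then h s i else 0 with hgg
    have i0 : Fin n := ⟨0, hn⟩
    have hgginj : Function.Injective gg := by
      intro s s' hss
      apply hinj i0
      have := congrFun (congrFun hss i0) 0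
      simpa [hgg] using this
    refine ⟨Finset.image gg Finset.univ, ?_, ?_, ?_, ?_, ?_, ?_⟩
    · rw [Finset.card_image_of_injective _ hgginj]
      simp
    · intro g hg i j hj
      obtain ⟨s, _, rfl⟩ := Finset.mem_image.mp hg
      simp only [hgg]
      rw [if_neg (by omega)]
    · intro g hg i j hj
      obtain ⟨s, _, rfl⟩ := Finset.mem_image.mp hg
      have : j = 0 := by omega
      subst this
      simpa [hgg] using hmem s i
    · intro g hg i j hj
      omega
    · intro g hg i i' j hj hadj
      obtain ⟨s, _, rfl⟩ := Finset.mem_image.mp hg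
      have : j = 0 := by omega
      subst this
      simpa [hgg] using hprop s i i' hadj
    · intro i j hj c hc
      have : j = 0 := by omega
      subst this
      -- exactly one s with h s i = c
      have himg : Finset.image (fun s => h s i) Finset.univ = L i 0 := by
        apply Finset.eq_of_subset_of_card_le
        · intro x hx
          obtain ⟨s, _, rfl⟩ := Finset.mem_image.mp hx
          exact hmem s i
        · rw [Finset.card_image_of_injective _ (hinj i)]
          simp [hL i 0 (by norm_num)]
      obtain ⟨s0, _, hs0⟩ := Finset.mem_image.mp (himg ▸ hc)
      have hfilt : (Finset.image gg Finset.univ).filter (fun g => g i 0 = c)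
          = {gg s0} := by
        ext g
        simp only [Finset.mem_filter, Finset.mem_image, Finset.mem_singleton,
          Finset.mem_univ, true_and]
        constructor
        · rintro ⟨⟨s, rfl⟩, hgi⟩
          have hs : h s i = c := by simpa [hgg] using hgi
          have : s = s0 := hinj i (show h s i = h s0 i by rw [hs, hs0])
          rw [this]
        · rintro rfl
          exact ⟨⟨s0, rfl⟩, by simpa [hgg] using hs0⟩
      rw [hfilt]
      simp
  | succ m hm ih =>
    intro L hL
    obtain ⟨C, hcard, hnorm, hmem, hrow, hcol, hbal⟩ :=
      ih L (fun i j hj => hL i j (by omega))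
    -- the bijections ψ i : L i (m-1) → L i m
    have hψex : ∀ i : Fin n, ∃ ψ : ℕ → ℕ,
        (∀ c ∈ L i (m-1), ψ c ∈ L i m) ∧ Set.InjOn ψ (L i (m-1)) ∧
        (∀ c ∈ L i (m-1), c ∈ L i m → ψ c = c) ∧
        (L i (m-1)).image ψ = L i m := by
      intro i
      exact psiExists _ _ (by rw [hL i (m-1) (by omega), hL i m (by omega)])
    choose ψ hψ1 hψ2 hψ3 hψ4 using hψex
    -- new column lists
    set Bp : (Fin n → ℕ → ℕ) → Fin n → Finset ℕ :=
      fun p i => (L i m).erase (ψ i (p i (m-1))) with hBp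
    have hBpcard : ∀ p ∈ C, ∀ i, (Bp p i).card = 2 := by
      intro p hp i
      have h1 : ψ i (p i (m-1)) ∈ L i m :=
        hψ1 i _ (hmem p hp i (m-1) (by omega))
      rw [hBp]
      rw [Finset.card_erase_of_mem h1, hL i m (by omega)]
    have hcolex : ∀ p : (Fin n → ℕ → ℕ), p ∈ C →
        ∃ h : Fin 2 → Fin n → ℕ, (∀ s i, h s i ∈ Bp p i) ∧
        (∀ i, Function.Injective fun s => h s i) ∧
        (∀ s i i', (SimpleGraph.pathGraph n).Adj i i' → h s i ≠ h s i') := by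
      intro p hp
      exact pathPack (by norm_num) (Bp p) (hBpcard p hp)
    choose! newcol h1 h2 h3 using hcolex
    set child : (Fin n → ℕ → ℕ) → Fin 2 → (Fin n → ℕ → ℕ) :=
      fun p s i j => if j < m then p i j else if j = m then newcol p s i else 0
      with hchild
    have i0 : Fin n := ⟨0, hn⟩
    have hne01 : ∀ p ∈ C, child p 0 ≠ child p 1 := by
      intro p hp hEq
      have := congrFun (congrFun hEq i0) m
      simp only [hchild, lt_irrefl, if_neg (lt_irrefl m), if_pos rfl] at this
      exact (by decide : (0 : Fin 2) ≠ 1) (h2 p hp i0 this)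
    have hdiffparent : ∀ p ∈ C, ∀ q ∈ C, p ≠ q →
        ∀ s s', child p s ≠ child q s' := by
      intro p hp q hq hpq s s' hEq
      apply hpq
      funext i j
      by_cases hj : j < m
      · have := congrFun (congrFun hEq i) j
        simpa [hchild, if_pos hj] using this
      · rw [hnorm p hp i j (by omega), hnorm q hq i j (by omega)]
    set C' : Finset (Fin n → ℕ → ℕ) :=
      C.biUnion (fun p => {child p 0, child p 1}) with hC'
    have hpairdisj : ∀ p ∈ C, ∀ q ∈ C, p ≠ q →
        Disjoint ({child p 0, child p 1} : Finset (Fin n → ℕ → ℕ))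
          {child q 0, child q 1} := by
      intro p hp q hq hpq
      rw [Finset.disjoint_left]
      intro g hg1 hg2
      simp only [Finset.mem_insert, Finset.mem_singleton] at hg1 hg2
      rcases hg1 with rfl | rfl <;> rcases hg2 with h | h <;>
        first
          | exact hdiffparent p hp q hq hpq 0 0 h
          | exact hdiffparent p hp q hq hpq 0 1 h
          | exact hdiffparent p hp q hq hpq 1 0 h
          | exact hdiffparent p hp q hq hpq 1 1 h
    have hmemC' : ∀ g, g ∈ C' ↔ ∃ p ∈ C, g = child p 0 ∨ g = child p 1 := by
      intro g
      simp [hC', Finset.mem_biUnion, Finset.mem_insert, Finset.mem_singleton]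
    refine ⟨C', ?_, ?_, ?_, ?_, ?_, ?_⟩
    · rw [hC', Finset.card_biUnion hpairdisj]
      have : ∀ p ∈ C, ({child p 0, child p 1} : Finset _).card = 2 := by
        intro p hp
        rw [Finset.card_insert_of_notMem (by simp [hne01 p hp]),
          Finset.card_singleton]
      rw [Finset.sum_congr rfl this, Finset.sum_const, hcard]
      have h2 : 2 ^ (m + 1 - 1) = 2 ^ (m-1) * 2 := by
        rw [Nat.add_sub_cancel, ← pow_succ]
        congr 1
        omega
      simp only [smul_eq_mul, h2]
      ring
    · intro g hg i j hj
      obtain ⟨p, hp, hg⟩ := (hmemC' g).mp hg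
      rcases hg with rfl | rfl <;>
      · simp only [hchild]
        rw [if_neg (by omega), if_neg (by omega)]
    · intro g hg i j hj
      obtain ⟨p, hp, hg⟩ := (hmemC' g).mp hg
      have key : ∀ s : Fin 2, child p s i j ∈ L i j := by
        intro s
        by_cases hjm : j < m
        · simp only [hchild]
          rw [if_pos hjm]
          exact hmem p hp i j hjm
        · have : j = m := by omega
          subst this
          simp [hchild]
          exact Finset.mem_of_mem_erase (h1 p hp s i)
      rcases hg with rfl | rfl
      · exact key 0
      · exact key 1
    · intro g hg i j hj
      obtain ⟨p, hp, hg⟩ := (hmemC' g).mp hg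
      have key : ∀ s : Fin 2, child p s i j ≠ child p s i (j+1) := by
        intro s
        by_cases hjm : j + 1 < m
        · simp only [hchild]
          rw [if_pos (by omega), if_pos hjm]
          exact hrow p hp i j hjm
        · have hj1 : j + 1 = m := by omega
          simp only [hchild]
          rw [if_pos (by omega), if_neg (by omega), if_pos hj1]
          -- p i j ≠ newcol p s i, j = m - 1
          have hjm1 : j = m - 1 := by omega
          subst hjm1
          intro hEq
          have hin : newcol p s i ∈ (L i m).erase (ψ i (p i (m-1))) := h1 p hp s i
          by_cases hcase : p i (m-1) ∈ L i m
          · have : ψ i (p i (m-1)) = p i (m-1) :=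
              hψ3 i _ (hmem p hp i (m-1) (by omega)) hcase
            rw [this] at hin
            exact Finset.ne_of_mem_erase hin hEq.symm
          · exact hcase (hEq ▸ Finset.mem_of_mem_erase hin)
      rcases hg with rfl | rfl
      · exact key 0
      · exact key 1
    · intro g hg i i' j hj hadj
      obtain ⟨p, hp, hg⟩ := (hmemC' g).mp hg
      have key : ∀ s : Fin 2, child p s i j ≠ child p s i' j := by
        intro s
        by_cases hjm : j < m
        · simp only [hchild, if_pos hjm]
          exact hcol p hp i i' j hjm hadj
        · have : j = m := by omega
          subst this
          simp [hchild]
          exact h3 p hp s i i' hadj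
      rcases hg with rfl | rfl
      · exact key 0
      · exact key 1
    · intro i j hj c hc
      have hfb : C'.filter (fun g => g i j = c)
          = C.biUnion (fun p => ({child p 0, child p 1} : Finset _).filter
              (fun g => g i j = c)) := by
        rw [hC', Finset.filter_biUnion]
      rw [hfb, Finset.card_biUnion (fun p hp q hq hpq =>
        Finset.disjoint_filter_filter (hpairdisj p hp q hq hpq))]
      by_cases hjm : j < m
      · -- old columns: each parent contributes twice its old contribution
        have hval : ∀ p ∈ C, (({child p 0, child p 1} : Finset _).filter
            (fun g => g i j = c)).card = if p i j = c then 2 else 0 := by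
          intro p hp
          rw [card_filter_pair (hne01 p hp)]
          have e0 : child p 0 i j = p i j := by
            simp only [hchild]; rw [if_pos hjm]
          have e1 : child p 1 i j = p i j := by
            simp only [hchild]; rw [if_pos hjm]
          rw [e0, e1]
          by_cases h : p i j = c <;> simp [h]
        have hsc : (∑ p ∈ C, (({child p 0, child p 1} : Finset _).filter
            (fun g => g i j = c)).card) = ∑ p ∈ C, if p i j = c then 2 else 0 :=
          Finset.sum_congr rfl hval
        rw [hsc]
        have hsum2 : (∑ p ∈ C, if p i j = c then 2 else 0)
            = 2 * (C.filter fun p => p i j = c).card := by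
          rw [Finset.card_filter, Finset.mul_sum]
          apply Finset.sum_congr rfl
          intro p hp
          by_cases h : p i j = c <;> simp [h]
        rw [hsum2, hbal i j hjm c hc]
        clear hsc hsum2 hval
        have h2 : 2 ^ (m + 1 - 1) = 2 ^ (m-1) * 2 := by
          clear * - hm
          rw [Nat.add_sub_cancel, ← pow_succ]
          congr 1
          omega
        rw [h2]
        ring
      · -- new column j = m
        have hjm' : j = m := by omega
        rw [hjm'] at hc ⊢
        have hval : ∀ p ∈ C, (({child p 0, child p 1} : Finset _).filter
            (fun g => g i m = c)).card
            = if ψ i (p i (m-1)) = c then 0 else 1 := by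
          intro p hp
          rw [card_filter_pair (hne01 p hp)]
          have e0 : child p 0 i m = newcol p 0 i := by
            show (if m < m then p i m else if m = m then newcol p 0 i else 0)
              = newcol p 0 i
            simp
          have e1 : child p 1 i m = newcol p 1 i := by
            show (if m < m then p i m else if m = m then newcol p 1 i else 0)
              = newcol p 1 i
            simp
          rw [e0, e1]
          have hpair : ({newcol p 0 i, newcol p 1 i} : Finset ℕ) = Bp p i := by
            apply Finset.eq_of_subset_of_card_le
            · intro x hx
              simp only [Finset.mem_insert, Finset.mem_singleton] at hx
              rcases hx with rfl | rfl
              · exact h1 p hp 0 i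
              · exact h1 p hp 1 i
            · rw [hBpcard p hp i]
              rw [Finset.card_insert_of_notMem (by
                simp only [Finset.mem_singleton]
                intro hEq
                exact (by decide : (0 : Fin 2) ≠ 1) (h2 p hp i hEq))]
              simp
          have hne : newcol p 0 i ≠ newcol p 1 i := by
            intro hEq
            exact (by decide : (0 : Fin 2) ≠ 1) (h2 p hp i hEq)
          by_cases hcase : ψ i (p i (m-1)) = c
          · -- c not in Bp p i, so neither child hits c
            have hcnot : c ∉ Bp p i := by
              simp only [hBp]
              rw [hcase]
              exact Finset.notMem_erase _ _
            rw [if_pos hcase]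
            have hc0 : ¬ (newcol p 0 i = c) := fun h => hcnot (h ▸ h1 p hp 0 i)
            have hc1 : ¬ (newcol p 1 i = c) := fun h => hcnot (h ▸ h1 p hp 1 i)
            simp [hc0, hc1]
          · have hcin : c ∈ Bp p i := by
              rw [hBp, Finset.mem_erase]
              exact ⟨fun h => hcase h.symm, hc⟩
            rw [if_neg hcase]
            rw [← hpair] at hcin
            simp only [Finset.mem_insert, Finset.mem_singleton] at hcin
            rcases hcin with rfl | rfl
            · simp [hne.symm]
            · simp [fun h => hne h]
        have hsc : (∑ p ∈ C, (({child p 0, child p 1} : Finset _).filter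
            (fun g => g i m = c)).card)
            = ∑ p ∈ C, if ψ i (p i (m-1)) = c then 0 else 1 :=
          Finset.sum_congr rfl hval
        rw [hsc]
        clear hsc hval
        -- sum = card C - #{p : ψ i (p i (m-1)) = c}
        have hsum : (∑ p ∈ C, if ψ i (p i (m-1)) = c then 0 else 1)
            = (C.filter fun p => ¬ ψ i (p i (m-1)) = c).card := by
          rw [Finset.card_filter]
          apply Finset.sum_congr rfl
          intro p hp
          by_cases h : ψ i (p i (m-1)) = c <;> simp [h]
        rw [hsum]
        clear hsum
        -- find the unique preimage c₀ of c
        have hcimg : c ∈ (L i (m-1)).image (ψ i) := by rw [hψ4 i]; exact hc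
        obtain ⟨c0, hc0mem, hc0⟩ := Finset.mem_image.mp hcimg
        have hfilter_eq : (C.filter fun p => ψ i (p i (m-1)) = c)
            = C.filter fun p => p i (m-1) = c0 := by
          ext p
          simp only [Finset.mem_filter, and_congr_right_iff]
          intro hp
          constructor
          · intro h
            exact hψ2 i (hmem p hp i (m-1) (by omega)) hc0mem (by rw [h, hc0])
          · intro h
            rw [h, hc0]
        have hcnt : (C.filter fun p => ψ i (p i (m-1)) = c).card = 2 ^ (m-1) := by
          rw [hfilter_eq]
          exact hbal i (m-1) (by omega) c0 hc0mem
        have hsplit := Finset.card_filter_add_card_filter_not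
          (s := C) (p := fun p => ψ i (p i (m-1)) = c)
        rw [hcard] at hsplit
        rw [hcnt] at hsplit
        have h2 : 2 ^ (m + 1 - 1) = 2 ^ (m-1) * 2 := by
          clear * - hm
          rw [Nat.add_sub_cancel, ← pow_succ]
          congr 1
          omega
        revert hsplit
        generalize ((C.filter fun p => ¬ ψ i (p i (m-1)) = c).card) = X
        intro hsplit
        clear * - hsplit h2
        omega

/-- for any 3-assignment of the grid there are 3·2^(m-1) proper
colorings in which every color of every list is used exactly 2^(m-1) times. -/
theorem stmt15 (n m : ℕ) (hn : 1 ≤ n) (hm : 1 ≤ m)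
    (L : Fin n × Fin m → Finset ℕ) (hL : ∀ v, (L v).card = 3) :
    ∃ C : Finset (Fin n × Fin m → ℕ),
      C.card = 3 * 2 ^ (m - 1) ∧
      (∀ f ∈ C, ProperListColoring ((pathGraph n).boxProd (pathGraph m)) L f) ∧
      ∀ v, ∀ c ∈ L v, (C.filter fun f => f v = c).card = 2 ^ (m - 1) := by
  classical
  set L' : Fin n → ℕ → Finset ℕ :=
    fun i j => if h : j < m then L (i, ⟨j, h⟩) else {0, 1, 2} with hL'
  have hL'card : ∀ i (j : ℕ), j < m → (L' i j).card = 3 := by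
    intro i j hj
    simp only [hL']
    rw [dif_pos hj]
    exact hL _
  have hLe : ∀ v : Fin n × Fin m, L' v.1 v.2.val = L v := by
    intro v
    simp only [hL']
    rw [dif_pos v.2.isLt]
  obtain ⟨C0, hcard, hnorm, hmem, hrow, hcolp, hbal⟩ := gridAux hn m hm L' hL'card
  set φ : (Fin n → ℕ → ℕ) → (Fin n × Fin m → ℕ) := fun g v => g v.1 v.2.val with hφ
  have hinj : Set.InjOn φ C0 := by
    intro g hg g' hg' hEq
    funext i j
    by_cases hj : j < m
    · have := congrFun hEq (i, ⟨j, hj⟩)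
      simpa [hφ] using this
    · rw [hnorm g hg i j (by omega), hnorm g' hg' i j (by omega)]
  refine ⟨C0.image φ, ?_, ?_, ?_⟩
  · rw [Finset.card_image_of_injOn hinj, hcard]
  · intro f hf
    obtain ⟨g, hg, rfl⟩ := Finset.mem_image.mp hf
    constructor
    · intro v
      have := hmem g hg v.1 v.2.val v.2.isLt
      rw [hLe v] at this
      exact this
    · intro u w hadj
      rw [SimpleGraph.boxProd_adj] at hadj
      rcases hadj with ⟨hadj1, heq2⟩ | ⟨hadj2, heq1⟩
      · have := hcolp g hg u.1 w.1 u.2.val u.2.isLt hadj1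
        intro hEq
        apply this
        calc g u.1 u.2.val = g w.1 w.2.val := hEq
          _ = g w.1 u.2.val := by rw [heq2]
      · rw [SimpleGraph.pathGraph_adj] at hadj2
        rcases hadj2 with h | h
        · intro hEq
          have hlt : u.2.val + 1 < m := by have := w.2.isLt; omega
          apply hrow g hg u.1 u.2.val hlt
          calc g u.1 u.2.val = g w.1 w.2.val := hEq
            _ = g u.1 (u.2.val + 1) := by rw [heq1, h]
        · intro hEq
          have hlt : w.2.val + 1 < m := by have := u.2.isLt; omega
          apply hrow g hg w.1 w.2.val hlt
          calc g w.1 w.2.val = g u.1 u.2.val := hEq.symm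
            _ = g w.1 (w.2.val + 1) := by rw [heq1, ← h]
  · intro v c hc
    have hb := hbal v.1 v.2.val v.2.isLt c (by rw [hLe v]; exact hc)
    rw [Finset.filter_image]
    rw [Finset.card_image_of_injOn (hinj.mono (Finset.filter_subset _ _))]
    rw [← hb]
end
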